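/- arXiv:0806.4583 — 5 statements merged into one kernel-verified Lean document; each statement's English description precedes it below -/
import Mathlib

section
/- Let F be a string-net tensor satisfying the pentagon identity, unitarity, tetrahedral symmetry, normalization, and physicality, with all d_i > 0. Then for all string types i,j,m,m' the orthogonality relation Σ_n F^{ijm}_{kln} (F^{ijm'}_{kln})* · δ_{iln} δ_{jkn*} = δ_{mm'} δ_{ijm} δ_{klm*} holds whenever δ_{ijm} δ_{klm*} = 1 or δ_{ijm'} δ_{klm'*} = 1; i.e., the matrix [F^{ij}_{kl}]_{mn} restricted to allowed internal labels is unitary. -/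
open scoped ComplexConjugate

/-!
Call `u` admissible when `δ_{iju} δ_{klu*} = 1`. Specialise the pentagon identity to the labels
`(k*, k, 0, j, j*, i, u, l, v)`. For admissible `v`, normalization, tetrahedral symmetry and
physicality turn its `n`-th term into `√(d_l / (d_k d_u))` times
`F^{iju}_{kln} (F^{ijv}_{kln})* δ_{iln} δ_{jkn*}`; for admissible `u`, its right-hand side
`F^{iuj}_{0jv} F^{v*u0}_{k*kl}` is `√(d_l / (d_k d_u)) δ_{uv}`. If `m` or `m'` is not admissible,
physicality kills every term of the sum.
-/

structure IsStringNet {ι : Type*} [Fintype ι] [DecidableEq ι] [Zero ι]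
    (st : ι → ι) (Δ : ι → ι → ι → ℂ) (F : ι → ι → ι → ι → ι → ι → ℂ) (d : ι → ℝ) : Prop where
  star_star : ∀ i, st (st i) = i
  star_zero : st 0 = 0
  delta_eq_zero_or_one : ∀ i j k, Δ i j k = 0 ∨ Δ i j k = 1
  delta_cyclic : ∀ i j k, Δ i j k = Δ j k i
  delta_star_zero : ∀ i j, Δ i (st j) 0 = if i = j then 1 else 0
  dim_pos : ∀ i, 0 < d i
  F_eq_inv_dim : ∀ i, F i (st i) 0 i (st i) 0 = ((d i)⁻¹ : ℝ)
  physical : ∀ i j m k l n,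
    F i j m k l n * Δ i j m * Δ k l (st m) = F i j m k l n * Δ i l n * Δ j k (st n)
  pentagon : ∀ m l q k p j i s r,
    ∑ n, F m l q k p n * F j i (st p) m n s * F j s n l k r =
      F j i (st p) (st q) k r * F (st r) i (st q) m l s
  conj_F : ∀ i j m k l n, conj (F i j m k l n) = F (st i) (st j) (st m) (st k) (st l) (st n)
  F_swap : ∀ i j m k l n, F i j m k l n = F j i m l k (st n)
  F_flip : ∀ i j m k l n, F i j m k l n = F l k (st m) j i n
  F_pivot : ∀ i j m k l n,
    F i j m k l n = F i m j (st k) n l * (Real.sqrt (d m * d n / (d j * d l)) : ℝ)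
  F_normalization : ∀ i j k,
    F i (st i) 0 (st j) j k = (Real.sqrt (d k / (d i * d j)) : ℝ) * Δ i j k

namespace IsStringNet

variable {ι : Type*} [Fintype ι] [DecidableEq ι] [Zero ι] {st : ι → ι}
  {Δ : ι → ι → ι → ℂ} {F : ι → ι → ι → ι → ι → ι → ℂ} {d : ι → ℝ}

theorem star_injective (h : IsStringNet st Δ F d) : Function.Injective st :=
  Function.LeftInverse.injective h.star_star

theorem conj_delta (h : IsStringNet st Δ F d) (i j k : ι) : conj (Δ i j k) = Δ i j k := by
  rcases h.delta_eq_zero_or_one i j k with hδ | hδ <;> simp [hδ]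

theorem delta_mul_delta_eq_zero_or_one (h : IsStringNet st Δ F d) (i j k i' j' k' : ι) :
    Δ i j k * Δ i' j' k' = 0 ∨ Δ i j k * Δ i' j' k' = 1 := by
  rcases h.delta_eq_zero_or_one i j k with hδ | hδ <;>
    rcases h.delta_eq_zero_or_one i' j' k' with hδ' | hδ' <;> simp [hδ, hδ']

theorem delta_eq_one_of_mul_eq_one (h : IsStringNet st Δ F d) {i j k i' j' k' : ι}
    (hδ : Δ i j k * Δ i' j' k' = 1) : Δ i j k = 1 ∧ Δ i' j' k' = 1 := by
  rcases h.delta_eq_zero_or_one i j k with h₁ | h₁ <;>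
    rcases h.delta_eq_zero_or_one i' j' k' with h₂ | h₂ <;> simp_all

theorem ofReal_sqrt_dim_div_ne_zero (h : IsStringNet st Δ F d) (a b c : ι) :
    ((Real.sqrt (d a / (d b * d c)) : ℝ) : ℂ) ≠ 0 := by
  have := h.dim_pos a; have := h.dim_pos b; have := h.dim_pos c
  exact_mod_cast (Real.sqrt_pos.mpr (by positivity)).ne'

theorem dim_star (h : IsStringNet st Δ F d) (a : ι) : d (st a) = d a := by
  have key := h.F_swap a (st a) 0 a (st a) 0
  have hdim := h.F_eq_inv_dim (st a)
  rw [h.star_zero] at key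
  rw [h.star_star] at hdim
  rw [h.F_eq_inv_dim, hdim] at key
  exact (inv_injective (by exact_mod_cast key)).symm

theorem dim_zero (h : IsStringNet st Δ F d) : d 0 = 1 := by
  have hdim := h.F_eq_inv_dim 0
  have hnorm := h.F_normalization 0 0 0
  have hδ : Δ 0 0 0 = 1 := by simpa [h.star_zero] using h.delta_star_zero 0 0
  rw [h.star_zero] at hdim hnorm
  rw [hdim, hδ, mul_one, div_mul_cancel_left₀ (h.dim_pos 0).ne'] at hnorm
  have hpos : 0 < (d 0)⁻¹ := inv_pos.mpr (h.dim_pos 0)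
  have hsq : (d 0)⁻¹ * (d 0)⁻¹ = (d 0)⁻¹ :=
    (Real.sqrt_eq_iff_mul_self_eq_of_pos hpos).mp (by exact_mod_cast hnorm.symm)
  exact inv_eq_one.mp (mul_left_cancel₀ hpos.ne' (hsq.trans (mul_one _).symm))

theorem delta_swap (h : IsStringNet st Δ F d) (a b c : ι) : Δ a b c = Δ b a c := by
  have hflip := h.F_flip a (st a) 0 (st b) b c
  rw [h.star_zero, h.F_normalization, h.F_normalization, mul_comm (d b)] at hflip
  exact mul_left_cancel₀ (h.ofReal_sqrt_dim_div_ne_zero c a b) hflip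

theorem delta_star (h : IsStringNet st Δ F d) (a b c : ι) :
    Δ (st a) (st b) (st c) = Δ a b c := by
  have hswap := h.F_swap a (st a) 0 (st b) b c
  have hnorm := h.F_normalization (st a) (st b) (st c)
  rw [h.star_star, h.star_star] at hnorm
  rw [h.F_normalization, hnorm, h.dim_star, h.dim_star, h.dim_star] at hswap
  exact (mul_left_cancel₀ (h.ofReal_sqrt_dim_div_ne_zero c a b) hswap).symm

theorem F_star_self_zero (h : IsStringNet st Δ F d) (a b c : ι) :
    F (st a) a 0 b (st b) c = (Real.sqrt (d c / (d a * d b)) : ℝ) * Δ b a (st c) := by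
  have hnorm := h.F_normalization (st a) (st b) c
  rw [h.star_star, h.star_star, h.dim_star, h.dim_star] at hnorm
  rw [hnorm, ← h.delta_star, h.star_star, h.star_star, h.delta_swap]

theorem F_star_self_zero_star (h : IsStringNet st Δ F d) (a b c : ι) :
    F (st a) a 0 (st b) b c = (Real.sqrt (d c / (d b * d a)) : ℝ) * Δ b (st a) c := by
  have hnorm := h.F_normalization b (st a) c
  rw [h.star_star, h.dim_star] at hnorm
  rw [h.F_flip, h.star_zero, hnorm]

theorem F_reflect (h : IsStringNet st Δ F d) (a b c e f g : ι) :
    F a b c e f g = F (st e) (st b) g (st a) (st f) c := by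
  have := h.dim_pos b; have := h.dim_pos c; have := h.dim_pos f; have := h.dim_pos g
  rw [h.F_pivot, h.F_swap a, h.F_flip c, h.F_pivot (st e), h.dim_star, h.dim_star, mul_assoc,
    ← Complex.ofReal_mul, ← Real.sqrt_mul (by positivity)]
  have hone : d b * d f / (d g * d c) * (d c * d g / (d b * d f)) = 1 := by
    field_simp
  rw [hone, Real.sqrt_one, Complex.ofReal_one, mul_one]

theorem F_rotate (h : IsStringNet st Δ F d) (a b c e f g : ι) :
    F a b c e f g = F (st a) (st f) (st g) (st e) (st b) (st c) := by
  rw [h.F_flip, h.F_swap, h.F_reflect]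

theorem conj_F_eq (h : IsStringNet st Δ F d) (a b c e f g : ι) :
    conj (F a b c e f g) = F a f g e b c := by
  rw [h.conj_F, h.F_rotate]
  simp only [h.star_star]

theorem F_zero_mid (h : IsStringNet st Δ F d) (x y z : ι) : F x 0 (st x) y z y = Δ x y z := by
  have hpivot := h.F_pivot x (st x) 0 (st y) y z
  rw [h.star_star, h.F_normalization, h.dim_star, h.dim_zero, one_mul, mul_comm] at hpivot
  exact (mul_right_cancel₀ (h.ofReal_sqrt_dim_div_ne_zero z x y) hpivot).symm

theorem F_zero_diag (h : IsStringNet st Δ F d) (a b c : ι) : F a b c 0 c b = Δ a b c := by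
  have hmid := h.F_zero_mid (st b) (st c) (st a)
  rw [h.star_star] at hmid
  rw [h.F_reflect, h.star_zero, h.F_swap, hmid, h.delta_star, ← h.delta_cyclic]

theorem F_zero_offdiag (h : IsStringNet st Δ F d) {a b c e : ι} (hbe : b ≠ e)
    (habc : Δ a b c = 1) : F a b c 0 c e = 0 := by
  have hphys := h.physical a b c 0 c e
  have hδc : Δ 0 c (st c) = 1 := by rw [h.delta_cyclic, h.delta_star_zero, if_pos rfl]
  have hδe : Δ b 0 (st e) = 0 := by
    rw [h.delta_cyclic, h.delta_cyclic, ← h.star_star b, h.delta_star_zero,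
      if_neg (h.star_injective.ne hbe).symm]
  rwa [habc, hδc, hδe, mul_one, mul_one, mul_zero] at hphys

theorem F_mul_delta_mul_delta (h : IsStringNet st Δ F d) (i j m k l n : ι) :
    F i j m k l n * Δ i l n * Δ j k (st n) = F i j m k l n * (Δ i j m * Δ k l (st m)) := by
  rw [← h.physical, mul_assoc]

theorem F_mul_delta_eq_self (h : IsStringNet st Δ F d) {i j m k l : ι}
    (hm : Δ i j m * Δ k l (st m) = 1) (n : ι) :
    F i j m k l n * Δ j k (st n) = F i j m k l n := by
  have hphys := h.F_mul_delta_mul_delta i j m k l n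
  rw [hm, mul_one] at hphys
  rcases h.delta_eq_zero_or_one j k (st n) with hδ | hδ
  · rw [hδ, mul_zero] at hphys ⊢
    exact hphys
  · rw [hδ, mul_one]

theorem F_mul_conj_F_mul_delta_mul_delta_eq_zero (h : IsStringNet st Δ F d)
    {i j k l m m' : ι}
    (hmm' : Δ i j m * Δ k l (st m) = 0 ∨ Δ i j m' * Δ k l (st m') = 0) (n : ι) :
    F i j m k l n * conj (F i j m' k l n) * Δ i l n * Δ j k (st n) = 0 := by
  rcases hmm' with hm | hm'
  · have hphys := h.F_mul_delta_mul_delta i j m k l n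
    rw [hm, mul_zero] at hphys
    linear_combination conj (F i j m' k l n) * hphys
  · have hphys := congrArg conj (h.F_mul_delta_mul_delta i j m' k l n)
    simp only [hm', mul_zero, map_mul, map_zero, h.conj_delta] at hphys
    linear_combination F i j m k l n * hphys

theorem pentagon_term_eq (h : IsStringNet st Δ F d) {i j k l u v : ι}
    (hv : Δ i j v * Δ k l (st v) = 1) (n : ι) :
    F (st k) k 0 j (st j) n * F i u j (st k) n l * F i l n k j v =
      (Real.sqrt (d l / (d k * d u)) : ℝ) *
        (F i j u k l n * conj (F i j v k l n) * Δ i l n * Δ j k (st n)) := by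
  have hsummand : F i j u k l n * conj (F i j v k l n) * Δ i l n * Δ j k (st n) =
      F i j u k l n * F i l n k j v := by
    have hphys := congrArg conj (h.F_mul_delta_mul_delta i j v k l n)
    simp only [hv, mul_one, map_mul, h.conj_delta] at hphys
    rw [mul_assoc, mul_assoc, ← mul_assoc (conj _), hphys, h.conj_F_eq]
  have habsorb : F i l n k j v * Δ j k (st n) = F i l n k j v := by
    have := congrArg conj (h.F_mul_delta_eq_self hv n)
    rwa [map_mul, h.conj_delta, h.conj_F_eq] at this
  have hsqrt : ((Real.sqrt (d l / (d k * d u)) : ℝ) : ℂ) *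
      (Real.sqrt (d u * d n / (d j * d l)) : ℝ) = (Real.sqrt (d n / (d k * d j)) : ℝ) := by
    have := h.dim_pos j; have := h.dim_pos k; have := h.dim_pos l; have := h.dim_pos u
    rw [← Complex.ofReal_mul, ← Real.sqrt_mul (by positivity)]
    congr 2
    field_simp
  rw [hsummand, h.F_star_self_zero, h.F_pivot i j u k l n]
  linear_combination (Real.sqrt (d n / (d k * d j)) : ℂ) * F i u j (st k) n l * habsorb -
    F i u j (st k) n l * F i l n k j v * hsqrt

theorem sum_F_mul_conj_F_eq_ite (h : IsStringNet st Δ F d) {i j k l u v : ι}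
    (hu : Δ i j u * Δ k l (st u) = 1) (hv : Δ i j v * Δ k l (st v) = 1) :
    ∑ n, F i j u k l n * conj (F i j v k l n) * Δ i l n * Δ j k (st n) =
      if u = v then 1 else 0 := by
  have hpent := h.pentagon (st k) k 0 j (st j) i u l v
  simp only [h.star_star, h.star_zero] at hpent
  have hsum : ((Real.sqrt (d l / (d k * d u)) : ℝ) : ℂ) *
      ∑ n, F i j u k l n * conj (F i j v k l n) * Δ i l n * Δ j k (st n) =
        F i u j 0 j v * F (st v) u 0 (st k) k l := by
    rw [Finset.mul_sum, ← hpent]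
    exact Finset.sum_congr rfl fun n _ => (h.pentagon_term_eq hv n).symm
  obtain ⟨hiju, hklu⟩ := h.delta_eq_one_of_mul_eq_one hu
  have hiuj : Δ i u j = 1 := by rw [h.delta_cyclic, h.delta_swap, ← h.delta_cyclic, hiju]
  have hkul : Δ k (st u) l = 1 := by rw [h.delta_swap, h.delta_cyclic, hklu]
  by_cases huv : u = v
  · subst huv
    rw [h.F_zero_diag, hiuj, one_mul, h.F_star_self_zero_star, hkul, mul_one] at hsum
    rw [if_pos rfl]
    exact mul_left_cancel₀ (h.ofReal_sqrt_dim_div_ne_zero l k u) (hsum.trans (mul_one _).symm)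
  · rw [h.F_zero_offdiag huv hiuj, zero_mul] at hsum
    rw [if_neg huv]
    exact (mul_eq_zero.mp hsum).resolve_left (h.ofReal_sqrt_dim_div_ne_zero l k u)

theorem F_orthogonality (h : IsStringNet st Δ F d) {i j k l m m' : ι}
    (hmm' : Δ i j m * Δ k l (st m) = 1 ∨ Δ i j m' * Δ k l (st m') = 1) :
    ∑ n, F i j m k l n * conj (F i j m' k l n) * Δ i l n * Δ j k (st n) =
      (if m = m' then 1 else 0) * Δ i j m * Δ k l (st m) := by
  by_cases hboth : Δ i j m * Δ k l (st m) = 1 ∧ Δ i j m' * Δ k l (st m') = 1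
  · rw [mul_assoc, hboth.1, mul_one]
    exact h.sum_F_mul_conj_F_eq_ite hboth.1 hboth.2
  · have hne : m ≠ m' := by
      rintro rfl
      exact hboth ⟨hmm'.elim id id, hmm'.elim id id⟩
    have hzero : Δ i j m * Δ k l (st m) = 0 ∨ Δ i j m' * Δ k l (st m') = 0 := by
      rcases h.delta_mul_delta_eq_zero_or_one i j m k l (st m) with hm | hm <;>
        rcases h.delta_mul_delta_eq_zero_or_one i j m' k l (st m') with hm' | hm' <;>
          simp_all
    rw [if_neg hne, zero_mul, zero_mul]
    exact Finset.sum_eq_zero fun n _ => h.F_mul_conj_F_mul_delta_mul_delta_eq_zero hzero n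

end IsStringNet

/-- For a string-net tensor `F` satisfying the pentagon identity, unitarity,
tetrahedral symmetry, normalization and physicality, with all `d_i > 0`, the matrix
`[F^{ij}_{kl}]_{mn}` restricted to allowed internal labels is unitary:
`Σ_n F^{ijm}_{kln} (F^{ijm'}_{kln})* δ_{iln} δ_{jkn*} = δ_{mm'} δ_{ijm} δ_{klm*}`
whenever `δ_{ijm} δ_{klm*} = 1` or `δ_{ijm'} δ_{klm'*} = 1`. -/
theorem stringnet_F_unitary {N : ℕ}
    (st : Fin (N + 1) → Fin (N + 1))
    (hst : ∀ i, st (st i) = i) (hst0 : st 0 = 0)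
    (Δ : Fin (N + 1) → Fin (N + 1) → Fin (N + 1) → ℂ)
    (hΔ01 : ∀ i j k, Δ i j k = 0 ∨ Δ i j k = 1)
    (hΔcyc : ∀ i j k, Δ i j k = Δ j k i)
    (hΔbr : ∀ i j, Δ i (st j) 0 = if i = j then 1 else 0)
    (F : Fin (N + 1) → Fin (N + 1) → Fin (N + 1) → Fin (N + 1) → Fin (N + 1) →
      Fin (N + 1) → ℂ)
    (d : Fin (N + 1) → ℝ)
    (hd : ∀ i, 0 < d i)
    (hdF : ∀ i, F i (st i) 0 i (st i) 0 = ((d i)⁻¹ : ℝ))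
    (hphys : ∀ i j m k l n,
      F i j m k l n * Δ i j m * Δ k l (st m) = F i j m k l n * Δ i l n * Δ j k (st n))
    (hpent : ∀ m l q k p j i s r,
      ∑ n, F m l q k p n * F j i (st p) m n s * F j s n l k r =
        F j i (st p) (st q) k r * F (st r) i (st q) m l s)
    (hun : ∀ i j m k l n, (starRingEnd ℂ) (F i j m k l n) =
      F (st i) (st j) (st m) (st k) (st l) (st n))
    (htet : ∀ i j m k l n,
      F i j m k l n = F j i m l k (st n) ∧
      F i j m k l n = F l k (st m) j i n ∧
      F i j m k l n = F i m j (st k) n l *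
        (Real.sqrt (d m * d n / (d j * d l)) : ℝ))
    (hnorm : ∀ i j k, F i (st i) 0 (st j) j k =
      (Real.sqrt (d k / (d i * d j)) : ℝ) * Δ i j k) :
    ∀ i j k l m m',
      (Δ i j m * Δ k l (st m) = 1 ∨ Δ i j m' * Δ k l (st m') = 1) →
      ∑ n, F i j m k l n * (starRingEnd ℂ) (F i j m' k l n) * Δ i l n * Δ j k (st n) =
        (if m = m' then 1 else 0) * Δ i j m * Δ k l (st m) := by
  have hF : IsStringNet st Δ F d :=
    ⟨hst, hst0, hΔ01, hΔcyc, hΔbr, hd, hdF, hphys, hpent, hun, fun _ _ _ _ _ _ => (htet ..).1,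
      fun _ _ _ _ _ _ => (htet ..).2.1, fun _ _ _ _ _ _ => (htet ..).2.2, hnorm⟩
  exact fun _ _ _ _ _ _ => hF.F_orthogonality
end

section
/- Let F be a string-net tensor satisfying the pentagon identity, unitarity, tetrahedral symmetry, normalization, and physicality, with all d_i > 0. Then the quantum dimensions satisfy the fusion relation d_i · d_j = Σ_k δ_{ijk*} d_k for all string types i, j. -/
/-!
Comparing the normalization with the definition of `d` gives `d 0 = 1` and `d i* = d i`.
Tetrahedral symmetry then moves the vacuum label of the normalization into other slots of `F`,
so that each `F` with a vacuum label is `Δ` times a square root of dimensions. In the pentagon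
with `q = i = r = 0` every term is `(d k / (d i d j)) Δ³` with `Δ³ = Δ`, and the right-hand side
is `1`: this is the fusion relation, up to reindexing `k ↦ k*`.
-/

namespace StringNet

variable {ι : Type*} [Zero ι] {st : ι → ι} {Δ : ι → ι → ι → ℂ}
  {F : ι → ι → ι → ι → ι → ι → ℂ} {d : ι → ℝ}

theorem dim_star_eq_dim_zero_mul (hst : ∀ i, st (st i) = i) (hd : ∀ i, 0 < d i)
    (hΔ : ∀ i, Δ i (st i) 0 = 1)
    (hdF : ∀ i, F i (st i) 0 i (st i) 0 = ((d i)⁻¹ : ℝ))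
    (hnorm : ∀ i j k, F i (st i) 0 (st j) j k =
      (Real.sqrt (d k / (d i * d j)) : ℝ) * Δ i j k) (i : ι) :
    d (st i) = d 0 * d i := by
  have h := hnorm i (st i) 0
  rw [hst, hdF, hΔ, mul_one] at h
  have hsqrt : (d i)⁻¹ = √(d 0 / (d i * d (st i))) := by exact_mod_cast h
  have hsq : (d i)⁻¹ ^ 2 = d 0 / (d i * d (st i)) := by
    rw [hsqrt, Real.sq_sqrt (div_pos (hd 0) (mul_pos (hd i) (hd (st i)))).le]
  have := (hd i).ne'
  have := (hd (st i)).ne'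
  field_simp at hsq
  linarith

theorem dim_zero (hst : ∀ i, st (st i) = i) (hst0 : st 0 = 0) (hd : ∀ i, 0 < d i)
    (hΔ : ∀ i, Δ i (st i) 0 = 1)
    (hdF : ∀ i, F i (st i) 0 i (st i) 0 = ((d i)⁻¹ : ℝ))
    (hnorm : ∀ i j k, F i (st i) 0 (st j) j k =
      (Real.sqrt (d k / (d i * d j)) : ℝ) * Δ i j k) :
    d 0 = 1 := by
  have h := dim_star_eq_dim_zero_mul hst hd hΔ hdF hnorm 0
  rw [hst0] at h
  nlinarith [hd 0]

theorem dim_star (hst : ∀ i, st (st i) = i) (hst0 : st 0 = 0) (hd : ∀ i, 0 < d i)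
    (hΔ : ∀ i, Δ i (st i) 0 = 1)
    (hdF : ∀ i, F i (st i) 0 i (st i) 0 = ((d i)⁻¹ : ℝ))
    (hnorm : ∀ i j k, F i (st i) 0 (st j) j k =
      (Real.sqrt (d k / (d i * d j)) : ℝ) * Δ i j k) (i : ι) :
    d (st i) = d i := by
  rw [dim_star_eq_dim_zero_mul hst hd hΔ hdF hnorm, dim_zero hst hst0 hd hΔ hdF hnorm, one_mul]

theorem F_snd_zero (hst : ∀ i, st (st i) = i) (hd : ∀ i, 0 < d i) (hd0 : d 0 = 1)
    (hdst : ∀ i, d (st i) = d i)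
    (hrot : ∀ i j m k l n, F i j m k l n = F i m j (st k) n l *
      (Real.sqrt (d m * d n / (d j * d l)) : ℝ))
    (hnorm : ∀ i j k, F i (st i) 0 (st j) j k =
      (Real.sqrt (d k / (d i * d j)) : ℝ) * Δ i j k) (i j k : ι) :
    F i 0 (st i) j k j = Δ i j k := by
  have h := hrot i (st i) 0 (st j) j k
  rw [hst, hdst, hd0, one_mul, hnorm, mul_comm] at h
  have hpos : 0 < √(d k / (d i * d j)) :=
    Real.sqrt_pos.2 (div_pos (hd k) (mul_pos (hd i) (hd j)))
  exact (mul_right_cancel₀ (Complex.ofReal_ne_zero.2 hpos.ne') h).symm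

theorem F_fourth_zero
    (hflip : ∀ i j m k l n, F i j m k l n = F l k (st m) j i n)
    (hF2 : ∀ i j k, F i 0 (st i) j k j = Δ i j k) (i j k : ι) :
    F k j i 0 i j = Δ i j k := by
  rw [← hF2, hflip]

theorem delta_comm (hst0 : st 0 = 0) (hd : ∀ i, 0 < d i)
    (hrot : ∀ i j m k l n, F i j m k l n = F i m j (st k) n l *
      (Real.sqrt (d m * d n / (d j * d l)) : ℝ))
    (hF4 : ∀ i j k, F k j i 0 i j = Δ i j k) (i j k : ι) :
    Δ j i k = Δ i j k := by
  have h := hrot k j i 0 i j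
  rw [hst0, mul_comm (d j), div_self (mul_pos (hd i) (hd j)).ne', Real.sqrt_one,
    Complex.ofReal_one, mul_one, hF4] at h
  rw [h, hF4]

theorem F_sixth_zero (hd : ∀ i, 0 < d i) (hd0 : d 0 = 1) (hdst : ∀ i, d (st i) = d i)
    (hswap : ∀ i j m k l n, F i j m k l n = F j i m l k (st n))
    (hrot : ∀ i j m k l n, F i j m k l n = F i m j (st k) n l *
      (Real.sqrt (d m * d n / (d j * d l)) : ℝ))
    (hF4 : ∀ i j k, F k j i 0 i j = Δ i j k) (i j k : ι) :
    F j i k (st i) (st j) 0 = (Real.sqrt (d k / (d i * d j)) : ℝ) * Δ i j k := by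
  have h := hrot j k i i 0 (st j)
  rw [← hswap, hF4, hdst, hd0, mul_one] at h
  have hprod : √(d k / (d i * d j)) * √(d i * d j / d k) = 1 := by
    rw [← Real.sqrt_mul (div_pos (hd k) (mul_pos (hd i) (hd j))).le,
      div_mul_div_cancel₀ (mul_pos (hd i) (hd j)).ne', div_self (hd k).ne', Real.sqrt_one]
  rw [h, ← mul_assoc, mul_comm _ (F _ _ _ _ _ _), mul_assoc, ← Complex.ofReal_mul, hprod,
    Complex.ofReal_one, mul_one]

theorem mul_dim_eq_sum [Fintype ι] (hst0 : st 0 = 0) (hd : ∀ i, 0 < d i)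
    (hΔ01 : ∀ i j k, Δ i j k = 0 ∨ Δ i j k = 1) (hΔcyc : ∀ i j k, Δ i j k = Δ j k i)
    (hΔ : ∀ i, Δ i (st i) 0 = 1) (hcomm : ∀ i j k, Δ j i k = Δ i j k)
    (hpent : ∀ m l q k p j i s r,
      ∑ n, F m l q k p n * F j i (st p) m n s * F j s n l k r =
        F j i (st p) (st q) k r * F (st r) i (st q) m l s)
    (hnorm : ∀ i j k, F i (st i) 0 (st j) j k =
      (Real.sqrt (d k / (d i * d j)) : ℝ) * Δ i j k)
    (hF2 : ∀ i j k, F i 0 (st i) j k j = Δ i j k)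
    (hF6 : ∀ i j k, F j i k (st i) (st j) 0 = (Real.sqrt (d k / (d i * d j)) : ℝ) * Δ i j k)
    (i j : ι) :
    (d i : ℂ) * d j = ∑ k, Δ i j k * d k := by
  have hterm : ∀ k, F i (st i) 0 (st j) j k * F j 0 (st j) i k i * F j i k (st i) (st j) 0 =
      ((d k / (d i * d j) : ℝ) : ℂ) * Δ i j k := by
    intro k
    rw [hnorm, hF2, hcomm i j k, hF6]
    rcases hΔ01 i j k with h | h <;> rw [h]
    · ring
    · rw [mul_one, mul_one, mul_one, ← Complex.ofReal_mul,
        Real.mul_self_sqrt (div_pos (hd k) (mul_pos (hd i) (hd j))).le]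
  have hvac₁ : F j 0 (st j) 0 (st j) 0 = 1 := by
    rw [hF2, hΔcyc, hΔcyc, hcomm, hΔ]
  have hvac₂ : F 0 0 0 i (st i) i = 1 := by
    have h := hF2 0 i (st i)
    rw [hst0] at h
    rw [h, hΔcyc, hΔ]
  have hsum := hpent i (st i) 0 (st j) j j 0 i 0
  simp only [hst0, hterm, hvac₁, hvac₂, mul_one] at hsum
  have hdi := Complex.ofReal_ne_zero.2 (hd i).ne'
  have hdj := Complex.ofReal_ne_zero.2 (hd j).ne'
  calc (d i : ℂ) * d j = (∑ k, ((d k / (d i * d j) : ℝ) : ℂ) * Δ i j k) * (d i * d j) := by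
        rw [hsum, one_mul]
    _ = ∑ k, Δ i j k * d k := by
        rw [Finset.sum_mul]
        refine Finset.sum_congr rfl fun k _ => ?_
        push_cast
        field_simp

end StringNet

theorem stringnet_fusion_dimensions_general {N : ℕ}
    (st : Fin (N + 1) → Fin (N + 1))
    (hst : ∀ i, st (st i) = i) (hst0 : st 0 = 0)
    (Δ : Fin (N + 1) → Fin (N + 1) → Fin (N + 1) → ℂ)
    (hΔ01 : ∀ i j k, Δ i j k = 0 ∨ Δ i j k = 1)
    (hΔcyc : ∀ i j k, Δ i j k = Δ j k i)
    (hΔbr : ∀ i j, Δ i (st j) 0 = if i = j then 1 else 0)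
    (F : Fin (N + 1) → Fin (N + 1) → Fin (N + 1) → Fin (N + 1) → Fin (N + 1) →
      Fin (N + 1) → ℂ)
    (d : Fin (N + 1) → ℝ)
    (hd : ∀ i, 0 < d i)
    (hdF : ∀ i, F i (st i) 0 i (st i) 0 = ((d i)⁻¹ : ℝ))
    (hpent : ∀ m l q k p j i s r,
      ∑ n, F m l q k p n * F j i (st p) m n s * F j s n l k r =
        F j i (st p) (st q) k r * F (st r) i (st q) m l s)
    (htet : ∀ i j m k l n,
      F i j m k l n = F j i m l k (st n) ∧
      F i j m k l n = F l k (st m) j i n ∧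
      F i j m k l n = F i m j (st k) n l *
        (Real.sqrt (d m * d n / (d j * d l)) : ℝ))
    (hnorm : ∀ i j k, F i (st i) 0 (st j) j k =
      (Real.sqrt (d k / (d i * d j)) : ℝ) * Δ i j k) :
    ∀ i j, ((d i : ℂ) * (d j : ℂ)) = ∑ k, Δ i j (st k) * (d k : ℂ) := by
  open StringNet in
  intro i j
  have hΔ : ∀ i, Δ i (st i) 0 = 1 := fun i => by simp [hΔbr]
  have hswap := fun i j m k l n => (htet i j m k l n).1
  have hflip := fun i j m k l n => (htet i j m k l n).2.1
  have hrot := fun i j m k l n => (htet i j m k l n).2.2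
  have hd0 := dim_zero hst hst0 hd hΔ hdF hnorm
  have hdst := dim_star hst hst0 hd hΔ hdF hnorm
  have hF2 := F_snd_zero hst hd hd0 hdst hrot hnorm
  have hF4 := F_fourth_zero hflip hF2
  have hF6 := F_sixth_zero hd hd0 hdst hswap hrot hF4
  rw [mul_dim_eq_sum hst0 hd hΔ01 hΔcyc hΔ (delta_comm hst0 hd hrot hF4) hpent hnorm hF2 hF6]
  exact Fintype.sum_equiv ⟨st, st, hst, hst⟩ _ _ fun k => by
    simp only [Equiv.coe_fn_mk, hst, hdst]

/-- For a string-net tensor `F` satisfying the pentagon identity, unitarity,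
tetrahedral symmetry, normalization and physicality, with all `d_i > 0`, the quantum
dimensions satisfy the fusion relation `d_i · d_j = Σ_k δ_{ijk*} d_k`. -/
theorem stringnet_fusion_dimensions {N : ℕ}
    (st : Fin (N + 1) → Fin (N + 1))
    (hst : ∀ i, st (st i) = i) (hst0 : st 0 = 0)
    (Δ : Fin (N + 1) → Fin (N + 1) → Fin (N + 1) → ℂ)
    (hΔ01 : ∀ i j k, Δ i j k = 0 ∨ Δ i j k = 1)
    (hΔcyc : ∀ i j k, Δ i j k = Δ j k i)
    (hΔbr : ∀ i j, Δ i (st j) 0 = if i = j then 1 else 0)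
    (F : Fin (N + 1) → Fin (N + 1) → Fin (N + 1) → Fin (N + 1) → Fin (N + 1) →
      Fin (N + 1) → ℂ)
    (d : Fin (N + 1) → ℝ)
    (hd : ∀ i, 0 < d i)
    (hdF : ∀ i, F i (st i) 0 i (st i) 0 = ((d i)⁻¹ : ℝ))
    (hphys : ∀ i j m k l n,
      F i j m k l n * Δ i j m * Δ k l (st m) = F i j m k l n * Δ i l n * Δ j k (st n))
    (hpent : ∀ m l q k p j i s r,
      ∑ n, F m l q k p n * F j i (st p) m n s * F j s n l k r =
        F j i (st p) (st q) k r * F (st r) i (st q) m l s)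
    (hun : ∀ i j m k l n, (starRingEnd ℂ) (F i j m k l n) =
      F (st i) (st j) (st m) (st k) (st l) (st n))
    (htet : ∀ i j m k l n,
      F i j m k l n = F j i m l k (st n) ∧
      F i j m k l n = F l k (st m) j i n ∧
      F i j m k l n = F i m j (st k) n l *
        (Real.sqrt (d m * d n / (d j * d l)) : ℝ))
    (hnorm : ∀ i j k, F i (st i) 0 (st j) j k =
      (Real.sqrt (d k / (d i * d j)) : ℝ) * Δ i j k) :
    ∀ i j, ((d i : ℂ) * (d j : ℂ)) = ∑ k, Δ i j (st k) * (d k : ℂ) :=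
  stringnet_fusion_dimensions_general st hst hst0 Δ hΔ01 hΔcyc hΔbr F d hd hdF hpent htet hnorm
end

section
/- Let F satisfy the pentagon identity, unitarity, tetrahedral symmetry, normalization and physicality with d_i > 0 for all i. Define the F-move operator F_e on C^{N+1} ⊗ (C^{N+1})^{⊗4} by F_e(|m⟩ ⊗ |ijkl⟩) = Σ_n F^{ijm}_{kln} |n⟩ ⊗ |ijkl⟩ (with external labels i,j,k,l as controls). Then F_e restricted to the physical subspace spanned by basis states with δ_{ijm} δ_{klm*} = 1 is an isometry onto the subspace spanned by basis states with δ_{iln} δ_{jkn*} = 1. -/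
open scoped BigOperators

/-- The F-move operator `F_e` on `ℂ^{N+1} ⊗ (ℂ^{N+1})^{⊗4}`:
`F_e (|m⟩ ⊗ |ijkl⟩) = Σ_n F^{ijm}_{kln} |n⟩ ⊗ |ijkl⟩`, written as a matrix in the
standard basis, with basis indices `(m, (i, j, k, l))`. -/
def FMoveOp {N : ℕ}
    (F : Fin (N + 1) → Fin (N + 1) → Fin (N + 1) → Fin (N + 1) → Fin (N + 1) →
      Fin (N + 1) → ℂ) :
    Matrix (Fin (N + 1) × Fin (N + 1) × Fin (N + 1) × Fin (N + 1) × Fin (N + 1))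
      (Fin (N + 1) × Fin (N + 1) × Fin (N + 1) × Fin (N + 1) × Fin (N + 1)) ℂ :=
  fun x y =>
    if x.2 = y.2 then F y.2.1 y.2.2.1 y.1 y.2.2.2.1 y.2.2.2.2 x.1 else 0

/-!
The F-move is block diagonal: for each choice of the external labels `(i, j, k, l)` it acts on
the internal label by the matrix `n m ↦ F^{ijm}_{kln}`. Physicality makes a block vanish between
a source and a non-target label and between a non-source and a target label. The pentagon
identity with one vacuum label, simplified by normalization and the tetrahedral symmetries, gives
`Σ_n F^{ijp}_{kln} F^{iln}_{kjq} = δ_{pq}` on source labels; by unitarity this says that the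
source columns of each block are orthonormal, and the symmetry `F^{ijm}_{kln} = F^{k*j*n}_{i*l*m}`
turns it into orthonormality of the target rows. An operator with orthonormal source columns and
orthonormal target rows is an isometry of the source subspace onto the target subspace, inverted
by its adjoint.
-/

open Matrix

section SupportedIsometry

variable {ι κ R : Type*} [Fintype κ] [CommSemiring R]
  {A : Matrix ι κ R} {S : Set κ} {T : Set ι}

theorem mulVec_apply_eq_zero_of_notMem (hAS : ∀ ⦃x y⦄, y ∈ S → x ∉ T → A x y = 0) {v : κ → R}
    (hv : ∀ y ∉ S, v y = 0) {x : ι} (hx : x ∉ T) : (A *ᵥ v) x = 0 := by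
  refine Finset.sum_eq_zero fun y _ => ?_
  by_cases hy : y ∈ S
  · simp [hAS hy hx]
  · simp [hv y hy]

theorem mulVec_apply_eq_self_of_mem [DecidableEq κ] {M : Matrix κ κ R}
    (hM : ∀ ⦃p q⦄, p ∈ S → q ∈ S → M p q = (1 : Matrix κ κ R) p q) {w : κ → R}
    (hw : ∀ q ∉ S, w q = 0) {p : κ} (hp : p ∈ S) : (M *ᵥ w) p = w p := by
  calc (M *ᵥ w) p = ((1 : Matrix κ κ R) *ᵥ w) p := by
        refine Finset.sum_congr rfl fun q _ => ?_
        by_cases hq : q ∈ S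
        · simp only [hM hp hq]
        · simp [hw q hq]
    _ = w p := by rw [one_mulVec]

theorem star_mulVec_dotProduct_mulVec [Fintype ι] [DecidableEq κ] [StarRing R]
    (hcol : ∀ ⦃p q⦄, p ∈ S → q ∈ S → (Aᴴ * A) p q = (1 : Matrix κ κ R) p q) {v w : κ → R}
    (hv : ∀ y ∉ S, v y = 0) (hw : ∀ y ∉ S, w y = 0) :
    star (A *ᵥ v) ⬝ᵥ (A *ᵥ w) = star v ⬝ᵥ w := by
  rw [star_mulVec, ← dotProduct_mulVec, mulVec_mulVec]
  refine Finset.sum_congr rfl fun p _ => ?_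
  by_cases hp : p ∈ S
  · rw [mulVec_apply_eq_self_of_mem hcol hw hp]
  · simp [hv p hp]

theorem mulVec_conjTranspose_mulVec [Fintype ι] [DecidableEq ι] [StarRing R]
    (hAS : ∀ ⦃x y⦄, y ∈ S → x ∉ T → A x y = 0) (hAT : ∀ ⦃x y⦄, y ∉ S → x ∈ T → A x y = 0)
    (hrow : ∀ ⦃p q⦄, p ∈ T → q ∈ T → (A * Aᴴ) p q = (1 : Matrix ι ι R) p q) {w : ι → R}
    (hw : ∀ x ∉ T, w x = 0) :
    (∀ y ∉ S, (Aᴴ *ᵥ w) y = 0) ∧ A *ᵥ (Aᴴ *ᵥ w) = w := by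
  have hsupp : ∀ y ∉ S, (Aᴴ *ᵥ w) y = 0 :=
    fun y hy => mulVec_apply_eq_zero_of_notMem (fun _ _ hx hy' => by
      rw [conjTranspose_apply, hAT hy' hx, star_zero]) hw hy
  refine ⟨hsupp, funext fun x => ?_⟩
  by_cases hx : x ∈ T
  · rw [mulVec_mulVec, mulVec_apply_eq_self_of_mem hrow hw hx]
  · rw [mulVec_apply_eq_zero_of_notMem hAS hsupp hx, hw x hx]

end SupportedIsometry

theorem Complex.ofReal_sqrt_mul_ofReal_sqrt {x y z : ℝ} (hx : 0 ≤ x) (h : x * y = z) :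
    (Real.sqrt x : ℂ) * (Real.sqrt y : ℂ) = (Real.sqrt z : ℂ) := by
  rw [← h, Real.sqrt_mul hx, Complex.ofReal_mul]

/-- String-net data: `st` is the duality `i ↦ i*`, `Δ` the branching rules `δ_{ijk}` and `d` the
quantum dimensions; `F i j m k l n` stands for `F^{ijm}_{kln}`. -/
structure IsStringNet_s7 {L : Type*} [Fintype L] [DecidableEq L] [Zero L] (st : L → L)
    (Δ : L → L → L → ℂ) (F : L → L → L → L → L → L → ℂ) (d : L → ℝ) : Prop where
  involutive : Function.Involutive st
  st_zero : st 0 = 0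
  delta_eq_zero_or_one : ∀ i j k, Δ i j k = 0 ∨ Δ i j k = 1
  delta_cyclic : ∀ i j k, Δ i j k = Δ j k i
  delta_branch : ∀ i j, Δ i (st j) 0 = if i = j then 1 else 0
  d_pos : ∀ i, 0 < d i
  F_vacuum : ∀ i, F i (st i) 0 i (st i) 0 = ((d i)⁻¹ : ℝ)
  physical : ∀ i j m k l n,
    F i j m k l n * Δ i j m * Δ k l (st m) = F i j m k l n * Δ i l n * Δ j k (st n)
  pentagon : ∀ m l q k p j i s r,
    ∑ n, F m l q k p n * F j i (st p) m n s * F j s n l k r =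
      F j i (st p) (st q) k r * F (st r) i (st q) m l s
  unitary : ∀ i j m k l n, (starRingEnd ℂ) (F i j m k l n) =
    F (st i) (st j) (st m) (st k) (st l) (st n)
  tetrahedral_swap : ∀ i j m k l n, F i j m k l n = F j i m l k (st n)
  tetrahedral_flip : ∀ i j m k l n, F i j m k l n = F l k (st m) j i n
  tetrahedral_rotate : ∀ i j m k l n,
    F i j m k l n = F i m j (st k) n l * (Real.sqrt (d m * d n / (d j * d l)) : ℝ)
  normalization : ∀ i j k,
    F i (st i) 0 (st j) j k = (Real.sqrt (d k / (d i * d j)) : ℝ) * Δ i j k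

def fMove {L : Type*} [DecidableEq L] (F : L → L → L → L → L → L → ℂ) :
    Matrix (L × L × L × L × L) (L × L × L × L × L) ℂ :=
  blockDiagonal fun c => of fun n m => F c.1 c.2.1 m c.2.2.1 c.2.2.2 n

def fMoveSource {L : Type*} (st : L → L) (Δ : L → L → L → ℂ) : Set (L × L × L × L × L) :=
  {x | Δ x.2.1 x.2.2.1 x.1 * Δ x.2.2.2.1 x.2.2.2.2 (st x.1) = 1}

def fMoveTarget {L : Type*} (st : L → L) (Δ : L → L → L → ℂ) : Set (L × L × L × L × L) :=
  {x | Δ x.2.1 x.2.2.2.2 x.1 * Δ x.2.2.1 x.2.2.2.1 (st x.1) = 1}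

theorem FMoveOp_eq_fMove {N : ℕ} (F : Fin (N + 1) → Fin (N + 1) → Fin (N + 1) →
    Fin (N + 1) → Fin (N + 1) → Fin (N + 1) → ℂ) : FMoveOp F = fMove F := by
  ext ⟨n, c⟩ ⟨m, c'⟩
  rw [fMove, blockDiagonal_apply']
  split_ifs with hc
  · subst hc
    simp [FMoveOp]
  · simp [FMoveOp, hc]

namespace IsStringNet_s7

variable {L : Type*} [Fintype L] [DecidableEq L] [Zero L] {st : L → L} {Δ : L → L → L → ℂ}
  {F : L → L → L → L → L → L → ℂ} {d : L → ℝ}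

theorem F_eq_zero_of_ne (h : IsStringNet_s7 st Δ F d) {i j m k l n : L}
    (hne : Δ i j m * Δ k l (st m) ≠ Δ i l n * Δ j k (st n)) : F i j m k l n = 0 := by
  by_contra hF
  have e := h.physical i j m k l n
  rw [mul_assoc, mul_assoc] at e
  exact hne (mul_left_cancel₀ hF e)

theorem d_st (h : IsStringNet_s7 st Δ F d) (i : L) : d (st i) = d i := by
  have e := h.tetrahedral_swap i (st i) 0 i (st i) 0
  have e' := h.F_vacuum (st i)
  rw [h.involutive i] at e'
  rw [h.st_zero, e', h.F_vacuum i] at e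
  exact inv_injective (Complex.ofReal_injective e).symm

theorem sqrt_ne_zero (h : IsStringNet_s7 st Δ F d) (i j k : L) :
    (Real.sqrt (d k / (d i * d j)) : ℂ) ≠ 0 :=
  Complex.ofReal_ne_zero.mpr (Real.sqrt_ne_zero'.mpr
    (div_pos (h.d_pos k) (mul_pos (h.d_pos i) (h.d_pos j))))

theorem d_zero (h : IsStringNet_s7 st Δ F d) : d 0 = 1 := by
  have hΔ : Δ 0 0 0 = 1 := by simpa [h.st_zero] using h.delta_branch 0 0
  have hx : 0 ≤ (d 0)⁻¹ := inv_nonneg.mpr (h.d_pos 0).le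
  -- `F^{000}_{000}` is `d₀⁻¹` by definition of `d₀` and `√(d₀⁻¹)` by normalization.
  have e := h.normalization 0 0 0
  have e' := h.F_vacuum 0
  rw [h.st_zero] at e e'
  rw [e', hΔ, mul_one, div_mul_cancel_left₀ (h.d_pos 0).ne'] at e
  have hsq : (d 0)⁻¹ * (d 0)⁻¹ = (d 0)⁻¹ :=
    ((Real.sqrt_eq_iff_mul_self_eq hx hx).mp (Complex.ofReal_injective e).symm).symm
  exact inv_eq_one.mp ((mul_eq_left₀ (inv_ne_zero (h.d_pos 0).ne')).mp hsq)

theorem normalization_st (h : IsStringNet_s7 st Δ F d) (i j k : L) :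
    F (st i) i 0 j (st j) k = (Real.sqrt (d k / (d i * d j)) : ℝ) * Δ (st i) (st j) k := by
  have e := h.normalization (st i) (st j) k
  rwa [h.involutive i, h.involutive j, h.d_st, h.d_st] at e

theorem delta_comm (h : IsStringNet_s7 st Δ F d) (i j k : L) : Δ i j k = Δ j i k := by
  have e := h.tetrahedral_flip i (st i) 0 (st j) j k
  rw [h.st_zero, h.normalization, h.normalization, mul_comm (d j)] at e
  exact mul_left_cancel₀ (h.sqrt_ne_zero i j k) e

theorem delta_st (h : IsStringNet_s7 st Δ F d) (i j k : L) : Δ (st i) (st j) (st k) = Δ i j k := by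
  have e := h.tetrahedral_swap i (st i) 0 (st j) j k
  rw [h.normalization, normalization_st h, h.d_st] at e
  exact (mul_left_cancel₀ (h.sqrt_ne_zero i j k) e).symm

theorem delta_st_left (h : IsStringNet_s7 st Δ F d) (i j k : L) :
    Δ (st i) (st j) k = Δ i j (st k) := by
  rw [← h.delta_st i j (st k), h.involutive k]

theorem F_eq_F_st (h : IsStringNet_s7 st Δ F d) (a b c e f g : L) :
    F a b c e f g = F (st e) (st b) g (st a) (st f) c := by
  have := h.d_pos b; have := h.d_pos c; have := h.d_pos f; have := h.d_pos g
  calc F a b c e f g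
      = F (st e) g (st b) a c (st f) * (Real.sqrt (d c * d g / (d b * d f)) : ℝ) := by
        rw [h.tetrahedral_rotate, h.tetrahedral_swap a c, h.tetrahedral_flip c a]
    _ = F (st e) (st b) g (st a) (st f) c *
          ((Real.sqrt (d b * d f / (d g * d c)) : ℝ) *
            (Real.sqrt (d c * d g / (d b * d f)) : ℝ)) := by
        rw [h.tetrahedral_rotate (st e), h.d_st, h.d_st, mul_assoc]
    _ = F (st e) (st b) g (st a) (st f) c := by
        rw [Complex.ofReal_sqrt_mul_ofReal_sqrt (by positivity) (z := 1) (by field_simp),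
          Real.sqrt_one, Complex.ofReal_one, mul_one]

theorem star_F (h : IsStringNet_s7 st Δ F d) (a b c e f g : L) :
    star (F a b c e f g) = F a f g e b c := by
  rw [← starRingEnd_apply, h.unitary, h.tetrahedral_swap a f, h.F_eq_F_st f a,
    h.tetrahedral_swap (st b)]

theorem F_fourth_zero (h : IsStringNet_s7 st Δ F d) (i j k : L) : F i j k 0 k j = Δ k j i := by
  have := h.d_pos i; have := h.d_pos j; have := h.d_pos k
  rw [h.tetrahedral_flip, h.tetrahedral_rotate, h.normalization, h.d_st, h.d_zero, mul_right_comm,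
    Complex.ofReal_sqrt_mul_ofReal_sqrt (by positivity) (z := 1) (by field_simp),
    Real.sqrt_one, Complex.ofReal_one, one_mul]

theorem delta_zero (h : IsStringNet_s7 st Δ F d) (i j : L) : Δ i j 0 = if i = st j then 1 else 0 := by
  rw [← h.delta_branch, h.involutive j]

theorem F_mul_F_eq_sqrt_mul_F (h : IsStringNet_s7 st Δ F d) {a b c e p : L}
    (hp : Δ a b p * Δ c e (st p) = 1) (n : L) : F (st c) c 0 b (st b) n * F a p b (st c) n e =
      (Real.sqrt (d e / (d c * d p)) : ℂ) * F a b p c e n := by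
  rw [h.normalization_st c b n]
  rcases h.delta_eq_zero_or_one (st c) (st b) n with h0 | h1
  · have hF : F a b p c e n = 0 := h.F_eq_zero_of_ne (by
      rw [hp, ← h.delta_st_left b c n, h.delta_comm (st b), h0, mul_zero]
      exact one_ne_zero)
    rw [h0, hF]
    ring
  · have := h.d_pos b; have := h.d_pos c; have := h.d_pos e; have := h.d_pos n; have := h.d_pos p
    rw [h1, mul_one, h.tetrahedral_rotate a p b, h.involutive c, mul_left_comm,
      Complex.ofReal_sqrt_mul_ofReal_sqrt (by positivity) (z := d e / (d c * d p)) (by field_simp),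
      mul_comm]

theorem F_mul_F_eq_ite (h : IsStringNet_s7 st Δ F d) {a b c e p q : L}
    (hp : Δ a b p * Δ c e (st p) = 1) (hq : Δ a b q * Δ c e (st q) = 1) :
    F a p b 0 b q * F (st q) p 0 (st c) c e =
      if p = q then (Real.sqrt (d e / (d c * d p)) : ℂ) else 0 := by
  split_ifs with hpq
  · subst hpq
    have hnorm := h.normalization (st p) c e
    rw [h.involutive p, h.d_st] at hnorm
    rw [h.F_fourth_zero, hnorm, ← h.delta_cyclic a b p, h.delta_cyclic (st p) c e, mul_comm (d p)]
    linear_combination (Real.sqrt (d e / (d c * d p)) : ℂ) * hp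
  · have hΔ : Δ p (st c) (st e) = Δ c e (st p) := by
      rw [← h.delta_cyclic (st p) c e, ← h.delta_st (st p) c e, h.involutive]
    have hF : F (st q) p 0 (st c) c e = 0 := h.F_eq_zero_of_ne (by
      rw [h.delta_zero, if_neg fun hqp => hpq (h.involutive.injective hqp).symm, zero_mul, hΔ,
        h.delta_cyclic (st q) c e]
      exact (mul_ne_zero (right_ne_zero_of_mul_eq_one hq) (right_ne_zero_of_mul_eq_one hp)).symm)
    rw [hF, mul_zero]

theorem sum_F_mul_F (h : IsStringNet_s7 st Δ F d) {a b c e p q : L}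
    (hp : Δ a b p * Δ c e (st p) = 1) (hq : Δ a b q * Δ c e (st q) = 1) :
    ∑ n, F a b p c e n * F a e n c b q = if p = q then 1 else 0 := by
  -- Both sides of this pentagon instance are `√(d e / (d c * d p))` times those of the claim.
  have hpent := h.pentagon (st c) c 0 b (st b) a p e q
  rw [h.involutive b, h.st_zero,
    Finset.sum_congr rfl fun n _ => by rw [h.F_mul_F_eq_sqrt_mul_F hp, mul_assoc], ← Finset.mul_sum,
    h.F_mul_F_eq_ite hp hq] at hpent
  apply mul_left_cancel₀ (h.sqrt_ne_zero c p e)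
  rw [hpent]
  split_ifs <;> simp

theorem sum_star_F_mul_F (h : IsStringNet_s7 st Δ F d) {a b c e p q : L}
    (hp : Δ a b p * Δ c e (st p) = 1) (hq : Δ a b q * Δ c e (st q) = 1) :
    ∑ n, star (F a b p c e n) * F a b q c e n = if p = q then 1 else 0 := by
  calc ∑ n, star (F a b p c e n) * F a b q c e n = ∑ n, F a b q c e n * F a e n c b p :=
        Finset.sum_congr rfl fun n _ => by rw [h.star_F, mul_comm]
    _ = if p = q then 1 else 0 := by rw [h.sum_F_mul_F hq hp]; exact if_congr eq_comm rfl rfl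

theorem sum_F_mul_star_F (h : IsStringNet_s7 st Δ F d) {a b c e n n' : L}
    (hn : Δ a e n * Δ b c (st n) = 1) (hn' : Δ a e n' * Δ b c (st n') = 1) :
    ∑ m, F a b m c e n * star (F a b m c e n') = if n = n' then 1 else 0 := by
  have hsrc : ∀ {r}, Δ a e r * Δ b c (st r) = 1 →
      Δ (st c) (st b) r * Δ (st a) (st e) (st r) = 1 := fun hr => by
    rwa [h.delta_st_left, h.delta_comm c, h.delta_st, mul_comm]
  calc ∑ m, F a b m c e n * star (F a b m c e n')
      = ∑ m, star (F (st c) (st b) n' (st a) (st e) m) * F (st c) (st b) n (st a) (st e) m :=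
        Finset.sum_congr rfl fun m _ => by
          rw [h.F_eq_F_st a b m c e n, h.F_eq_F_st a b m c e n', mul_comm]
    _ = if n = n' then 1 else 0 := by
        rw [h.sum_star_F_mul_F (hsrc hn') (hsrc hn)]; exact if_congr eq_comm rfl rfl

theorem fMove_apply_of_mem_source (h : IsStringNet_s7 st Δ F d)
    ⦃x y : L × L × L × L × L⦄ (hy : y ∈ fMoveSource st Δ) (hx : x ∉ fMoveTarget st Δ) :
    fMove F x y = 0 := by
  obtain ⟨n, c⟩ := x
  obtain ⟨m, c'⟩ := y
  rw [fMove, blockDiagonal_apply']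
  split_ifs with hc
  · subst hc
    exact h.F_eq_zero_of_ne fun he => hx (he.symm.trans hy)
  · rfl

theorem fMove_apply_of_mem_target (h : IsStringNet_s7 st Δ F d)
    ⦃x y : L × L × L × L × L⦄ (hy : y ∉ fMoveSource st Δ) (hx : x ∈ fMoveTarget st Δ) :
    fMove F x y = 0 := by
  obtain ⟨n, c⟩ := x
  obtain ⟨m, c'⟩ := y
  rw [fMove, blockDiagonal_apply']
  split_ifs with hc
  · subst hc
    exact h.F_eq_zero_of_ne fun he => hy (he.trans hx)
  · rfl

theorem conjTranspose_fMove_mul_fMove_apply (h : IsStringNet_s7 st Δ F d)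
    ⦃x y : L × L × L × L × L⦄ (hx : x ∈ fMoveSource st Δ) (hy : y ∈ fMoveSource st Δ) :
    ((fMove F)ᴴ * fMove F) x y = (1 : Matrix _ _ ℂ) x y := by
  obtain ⟨p, c⟩ := x
  obtain ⟨q, c'⟩ := y
  rw [fMove, blockDiagonal_conjTranspose, ← blockDiagonal_mul, ← blockDiagonal_one,
    blockDiagonal_apply', blockDiagonal_apply']
  split_ifs with hc
  · subst hc
    simpa [mul_apply, one_apply] using h.sum_star_F_mul_F hx hy
  · rfl

theorem fMove_mul_conjTranspose_fMove_apply (h : IsStringNet_s7 st Δ F d)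
    ⦃x y : L × L × L × L × L⦄ (hx : x ∈ fMoveTarget st Δ) (hy : y ∈ fMoveTarget st Δ) :
    (fMove F * (fMove F)ᴴ) x y = (1 : Matrix _ _ ℂ) x y := by
  obtain ⟨n, c⟩ := x
  obtain ⟨n', c'⟩ := y
  rw [fMove, blockDiagonal_conjTranspose, ← blockDiagonal_mul, ← blockDiagonal_one,
    blockDiagonal_apply', blockDiagonal_apply']
  split_ifs with hc
  · subst hc
    simpa [mul_apply, one_apply] using h.sum_F_mul_star_F hx hy
  · rfl

end IsStringNet_s7

/-- For a string-net tensor `F` satisfying the axioms with `d_i > 0`, the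
F-move operator restricted to the physical subspace (spanned by basis states with
`δ_{ijm} δ_{klm*} = 1`) is an isometry onto the subspace spanned by basis states with
`δ_{iln} δ_{jkn*} = 1`: it maps the source subspace into the target subspace, preserves
inner products there, and is surjective onto the target subspace. -/
theorem FMove_isometry_physical {N : ℕ}
    (st : Fin (N + 1) → Fin (N + 1))
    (hst : ∀ i, st (st i) = i) (hst0 : st 0 = 0)
    (Δ : Fin (N + 1) → Fin (N + 1) → Fin (N + 1) → ℂ)
    (hΔ01 : ∀ i j k, Δ i j k = 0 ∨ Δ i j k = 1)
    (hΔcyc : ∀ i j k, Δ i j k = Δ j k i)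
    (hΔbr : ∀ i j, Δ i (st j) 0 = if i = j then 1 else 0)
    (F : Fin (N + 1) → Fin (N + 1) → Fin (N + 1) → Fin (N + 1) → Fin (N + 1) →
      Fin (N + 1) → ℂ)
    (d : Fin (N + 1) → ℝ)
    (hd : ∀ i, 0 < d i)
    (hdF : ∀ i, F i (st i) 0 i (st i) 0 = ((d i)⁻¹ : ℝ))
    (hphys : ∀ i j m k l n,
      F i j m k l n * Δ i j m * Δ k l (st m) = F i j m k l n * Δ i l n * Δ j k (st n))
    (hpent : ∀ m l q k p j i s r,
      ∑ n, F m l q k p n * F j i (st p) m n s * F j s n l k r =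
        F j i (st p) (st q) k r * F (st r) i (st q) m l s)
    (hun : ∀ i j m k l n, (starRingEnd ℂ) (F i j m k l n) =
      F (st i) (st j) (st m) (st k) (st l) (st n))
    (htet : ∀ i j m k l n,
      F i j m k l n = F j i m l k (st n) ∧
      F i j m k l n = F l k (st m) j i n ∧
      F i j m k l n = F i m j (st k) n l *
        (Real.sqrt (d m * d n / (d j * d l)) : ℝ))
    (hnorm : ∀ i j k, F i (st i) 0 (st j) j k =
      (Real.sqrt (d k / (d i * d j)) : ℝ) * Δ i j k)
    -- source (physical) and target basis-index sets
    (Src Tgt : Set (Fin (N + 1) × Fin (N + 1) × Fin (N + 1) × Fin (N + 1) × Fin (N + 1)))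
    (hSrc : ∀ x, x ∈ Src ↔ Δ x.2.1 x.2.2.1 x.1 * Δ x.2.2.2.1 x.2.2.2.2 (st x.1) = 1)
    (hTgt : ∀ x, x ∈ Tgt ↔ Δ x.2.1 x.2.2.2.2 x.1 * Δ x.2.2.1 x.2.2.2.1 (st x.1) = 1) :
    -- maps the physical subspace into the target subspace
    (∀ v, (∀ x, x ∉ Src → v x = 0) → ∀ x, x ∉ Tgt → (FMoveOp F).mulVec v x = 0) ∧
    -- preserves inner products on the physical subspace
    (∀ v w, (∀ x, x ∉ Src → v x = 0) → (∀ x, x ∉ Src → w x = 0) →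
      ∑ x, (starRingEnd ℂ) ((FMoveOp F).mulVec v x) * (FMoveOp F).mulVec w x =
        ∑ x, (starRingEnd ℂ) (v x) * w x) ∧
    -- surjective onto the target subspace
    (∀ w, (∀ x, x ∉ Tgt → w x = 0) →
      ∃ v, (∀ x, x ∉ Src → v x = 0) ∧ (FMoveOp F).mulVec v = w) := by
  have h : IsStringNet_s7 st Δ F d := ⟨hst, hst0, hΔ01, hΔcyc, hΔbr, hd, hdF, hphys, hpent, hun,
    fun i j m k l n => (htet i j m k l n).1, fun i j m k l n => (htet i j m k l n).2.1,
    fun i j m k l n => (htet i j m k l n).2.2, hnorm⟩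
  obtain rfl : Src = fMoveSource st Δ := Set.ext hSrc
  obtain rfl : Tgt = fMoveTarget st Δ := Set.ext hTgt
  rw [FMoveOp_eq_fMove]
  refine ⟨fun v hv x hx => mulVec_apply_eq_zero_of_notMem h.fMove_apply_of_mem_source hv hx,
    fun v w hv hw => ?_, fun w hw => ⟨_, mulVec_conjTranspose_mulVec h.fMove_apply_of_mem_source
      h.fMove_apply_of_mem_target h.fMove_mul_conjTranspose_fMove_apply hw⟩⟩
  simpa only [dotProduct, Pi.star_apply, starRingEnd_apply] using
    star_mulVec_dotProduct_mulVec h.conjTranspose_fMove_mul_fMove_apply hv hw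
end

section
/- For the Fibonacci string-net data (N=1, 1*=1, δ_{ijk}=0 only for triples with exactly one label equal to 1), define φ = (1+√5)/2 and the F-tensor by: F^{111}_{111} = -1/φ, F^{110}_{111} = F^{111}_{110} = 1/√φ, F^{011}_{011} = F^{101}_{101} = F^{110}_{110} = 1 (and similar entries forced by allowed branchings with a 0 label equal to 1), all other entries 0. Then F satisfies the pentagon identity Σ_n F^{mlq}_{kpn} F^{jip}_{mns} F^{jsn}_{lkr} = F^{jip}_{qkr} F^{riq}_{mls} for all labels, and d_1 = φ. -/
open scoped BigOperators

/-- Fibonacci branching rule on labels `ℤ/2`: a triple is allowed unless exactly one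
of its labels equals `1` (so `000, 011, 101, 110, 111` are allowed). -/
def fibAllowed (i j k : ZMod 2) : Prop :=
  ¬(i = 0 ∧ j = 0 ∧ k = 1) ∧ ¬(i = 0 ∧ j = 1 ∧ k = 0) ∧ ¬(i = 1 ∧ j = 0 ∧ k = 0)

instance (i j k : ZMod 2) : Decidable (fibAllowed i j k) := by
  unfold fibAllowed; infer_instance

noncomputable def goldenRatio' : ℝ := (1 + Real.sqrt 5) / 2

/-- The Fibonacci F-tensor: supported on tuples where all four vertex triples
`(i,j,m), (k,l,m), (i,l,n), (j,k,n)` are allowed; on the fully nontrivial block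
`i = j = k = l = 1` it is the matrix `[[1/φ, 1/√φ], [1/√φ, -1/φ]]` in the internal
labels `(m,n)`, and it equals `1` on all other allowed tuples. -/
noncomputable def fibF (i j m k l n : ZMod 2) : ℝ :=
  if fibAllowed i j m ∧ fibAllowed k l m ∧ fibAllowed i l n ∧ fibAllowed j k n then
    (if i = 1 ∧ j = 1 ∧ k = 1 ∧ l = 1 then
      (if m = 1 ∧ n = 1 then -(1 / goldenRatio')
       else if m = 0 ∧ n = 0 then 1 / goldenRatio'
       else 1 / Real.sqrt goldenRatio')
     else 1)
  else 0

/-!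
The entries of `fibF` are `0`, `1`, `±a` and `b` with `a = 1/φ` and `b = 1/√φ`, and these satisfy
`b² = a` and `a² + a = 1`. Every pentagon equation is a polynomial identity in `a` and `b` modulo
these two relations, so the pentagon holds for the F-symbols built from any such pair in any
commutative ring; this is a finite check over the 512 label tuples.
-/

def fibFOf {R : Type*} [Ring R] (a b : R) (i j m k l n : ZMod 2) : R :=
  if fibAllowed i j m ∧ fibAllowed k l m ∧ fibAllowed i l n ∧ fibAllowed j k n then
    (if i = 1 ∧ j = 1 ∧ k = 1 ∧ l = 1 then
      (if m = 1 ∧ n = 1 then -a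
       else if m = 0 ∧ n = 0 then a
       else b)
     else 1)
  else 0

theorem fibF_eq_fibFOf : fibF = fibFOf (1 / goldenRatio') (1 / Real.sqrt goldenRatio') := rfl

theorem fibFOf_one_one_zero_one_one_zero {R : Type*} [Ring R] (a b : R) :
    fibFOf a b 1 1 0 1 1 0 = a := by
  simp [fibFOf, fibAllowed]

theorem ZMod.two_eq_zero_or_eq_one (x : ZMod 2) : x = 0 ∨ x = 1 := by
  decide +revert

set_option maxHeartbeats 1000000 in
theorem fibFOf_pentagon {R : Type*} [CommRing R] (a b : R) (hb : b ^ 2 = a) (ha : a ^ 2 + a = 1)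
    (m l q k p j i s r : ZMod 2) :
    ∑ n : ZMod 2, fibFOf a b m l q k p n * fibFOf a b j i p m n s * fibFOf a b j s n l k r =
      fibFOf a b j i p q k r * fibFOf a b r i q m l s := by
  rw [show (Finset.univ : Finset (ZMod 2)) = {0, 1} from rfl, Finset.sum_pair zero_ne_one]
  rcases ZMod.two_eq_zero_or_eq_one m with rfl | rfl <;>
    rcases ZMod.two_eq_zero_or_eq_one l with rfl | rfl <;>
    rcases ZMod.two_eq_zero_or_eq_one q with rfl | rfl <;>
    rcases ZMod.two_eq_zero_or_eq_one k with rfl | rfl <;>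
    rcases ZMod.two_eq_zero_or_eq_one p with rfl | rfl <;>
    rcases ZMod.two_eq_zero_or_eq_one j with rfl | rfl <;>
    rcases ZMod.two_eq_zero_or_eq_one i with rfl | rfl <;>
    rcases ZMod.two_eq_zero_or_eq_one s with rfl | rfl <;>
    rcases ZMod.two_eq_zero_or_eq_one r with rfl | rfl <;>
    simp only [fibFOf, fibAllowed, zero_ne_one, one_ne_zero, and_false, and_true, and_self,
      not_false_eq_true, not_true_eq_false, ↓reduceIte] <;>
    grind

open Real goldenRatio

theorem goldenRatio'_eq_goldenRatio : goldenRatio' = φ := rfl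

theorem one_div_goldenRatio_sq_add_self : (1 / φ) ^ 2 + 1 / φ = 1 := by
  have h : 1 / φ = φ - 1 := by
    rw [one_div, inv_goldenRatio, ← one_sub_goldenConj]; ring
  rw [h]
  linear_combination goldenRatio_sq

theorem one_div_sqrt_goldenRatio_sq : (1 / √φ) ^ 2 = 1 / φ := by
  rw [div_pow, one_pow, sq_sqrt goldenRatio_pos.le]

/-- The Fibonacci string-net data satisfies the pentagon identity
`Σ_n F^{mlq}_{kpn} F^{jip}_{mns} F^{jsn}_{lkr} = F^{jip}_{qkr} F^{riq}_{mls}`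
for all labels, and the quantum dimension of the nontrivial label is
`d_1 = 1/F^{110}_{110} = φ = (1+√5)/2`. -/
theorem fibonacci_pentagon_and_dimension :
    (∀ m l q k p j i s r : ZMod 2,
      ∑ n : ZMod 2, fibF m l q k p n * fibF j i p m n s * fibF j s n l k r =
        fibF j i p q k r * fibF r i q m l s) ∧
    (fibF 1 1 0 1 1 0)⁻¹ = goldenRatio' := by
  rw [fibF_eq_fibFOf, goldenRatio'_eq_goldenRatio]
  refine ⟨fibFOf_pentagon _ _ one_div_sqrt_goldenRatio_sq one_div_goldenRatio_sq_add_self, ?_⟩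
  rw [fibFOf_one_one_zero_one_one_zero, one_div, inv_inv]
end

section
/- With B^i defined as in the triangular-plaquette string-net model, the operators B^i satisfy the fusion algebra B^i B^j = Σ_k δ_{i j k*} B^k on the physical subspace, for all string types i, j. -/
open scoped BigOperators

namespace SNproof

structure SN (N : ℕ) where
  st : Fin (N + 1) → Fin (N + 1)
  Δ : Fin (N + 1) → Fin (N + 1) → Fin (N + 1) → ℂ
  F : Fin (N + 1) → Fin (N + 1) → Fin (N + 1) → Fin (N + 1) → Fin (N + 1) →
      Fin (N + 1) → ℂ
  d : Fin (N + 1) → ℝ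
  hst : ∀ i, st (st i) = i
  hst0 : st 0 = 0
  hΔ01 : ∀ i j k, Δ i j k = 0 ∨ Δ i j k = 1
  hΔcyc : ∀ i j k, Δ i j k = Δ j k i
  hΔbr : ∀ i j, Δ i (st j) 0 = if i = j then 1 else 0
  hd : ∀ i, 0 < d i
  hdF : ∀ i, F i (st i) 0 i (st i) 0 = ((d i)⁻¹ : ℝ)
  hpent : ∀ m l q k p j i s r,
      ∑ n, F m l q k p n * F j i (st p) m n s * F j s n l k r =
        F j i (st p) (st q) k r * F (st r) i (st q) m l s
  hun : ∀ i j m k l n, (starRingEnd ℂ) (F i j m k l n) =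
      F (st i) (st j) (st m) (st k) (st l) (st n)
  htet1 : ∀ i j m k l n, F i j m k l n = F j i m l k (st n)
  htet2 : ∀ i j m k l n, F i j m k l n = F l k (st m) j i n
  htet3 : ∀ i j m k l n, F i j m k l n = F i m j (st k) n l *
      (Real.sqrt (d m * d n / (d j * d l)) : ℝ)
  hnorm : ∀ i j k, F i (st i) 0 (st j) j k =
      (Real.sqrt (d k / (d i * d j)) : ℝ) * Δ i j k

namespace SN

variable {N : ℕ} (A : SN N)

lemma dne (i : Fin (N + 1)) : A.d i ≠ 0 := ne_of_gt (A.hd i)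



end SN

lemma sqrt_pos_ne (x : ℝ) (hx : 0 < x) : ((Real.sqrt x : ℝ) : ℂ) ≠ 0 :=
  Complex.ofReal_ne_zero.mpr (ne_of_gt (Real.sqrt_pos.mpr hx))

namespace SN
variable {N : ℕ} (A : SN N)

lemma Δbr_self (i : Fin (N + 1)) : A.Δ i (A.st i) 0 = 1 := by
  rw [A.hΔbr i i, if_pos rfl]

lemma d0 : A.d 0 = 1 := by
  have h1 := A.hdF 0
  have h2 := A.hnorm 0 0 0
  rw [A.hst0] at h1 h2
  have hb : A.Δ 0 0 0 = 1 := by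
    have := A.hΔbr 0 0; rwa [A.hst0, if_pos rfl] at this
  rw [hb, mul_one, h1] at h2
  have h3 : ((A.d 0)⁻¹ : ℝ) = Real.sqrt (A.d 0 / (A.d 0 * A.d 0)) :=
    Complex.ofReal_inj.mp h2
  have hd0 := A.hd 0
  have h4 : A.d 0 / (A.d 0 * A.d 0) = (A.d 0)⁻¹ := by field_simp
  rw [h4] at h3
  have h5 : ((A.d 0)⁻¹) ^ 2 = (A.d 0)⁻¹ := by
    conv_lhs => rw [h3]
    exact Real.sq_sqrt (le_of_lt (by exact inv_pos.mpr hd0))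
  have h7 : (A.d 0) * ((A.d 0) - 1) = 0 := by
    have hne : (A.d 0) ≠ 0 := ne_of_gt hd0
    field_simp at h5
    nlinarith [h5]
  rcases mul_eq_zero.mp h7 with h | h
  · exact absurd h (ne_of_gt hd0)
  · linarith

lemma dst (i : Fin (N + 1)) : A.d (A.st i) = A.d i := by
  have h1 := A.hdF i
  have h2 := A.hnorm i (A.st i) 0
  rw [A.hst i] at h2
  rw [A.Δbr_self i, mul_one, h1, A.d0] at h2
  have h3 : ((A.d i)⁻¹ : ℝ) = Real.sqrt (1 / (A.d i * A.d (A.st i))) :=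
    Complex.ofReal_inj.mp h2
  have hdi := A.hd i
  have hds := A.hd (A.st i)
  have h5 : ((A.d i)⁻¹) ^ 2 = 1 / (A.d i * A.d (A.st i)) := by
    conv_lhs => rw [h3]
    exact Real.sq_sqrt (le_of_lt (by exact div_pos one_pos (mul_pos hdi hds)))
  have h6 : A.d i * A.d i = A.d i * A.d (A.st i) := by
    field_simp at h5
    nlinarith [h5]
  exact (mul_left_cancel₀ (A.dne i) h6.symm)

lemma Δsym (i j k : Fin (N + 1)) : A.Δ i j k = A.Δ j i k := by
  have h := A.htet2 i (A.st i) 0 (A.st j) j k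
  rw [A.hst0] at h
  rw [A.hnorm i j k] at h
  have h2 : A.F j (A.st j) 0 (A.st i) i k =
      (Real.sqrt (A.d k / (A.d j * A.d i)) : ℝ) * A.Δ j i k := A.hnorm j i k
  rw [h2] at h
  have hc : A.d k / (A.d i * A.d j) = A.d k / (A.d j * A.d i) := by ring_nf
  rw [hc] at h
  exact mul_left_cancel₀ (sqrt_pos_ne _ (div_pos (A.hd _) (mul_pos (A.hd _) (A.hd _)))) h

lemma Δstar (i j k : Fin (N + 1)) :
    A.Δ i j k = A.Δ (A.st i) (A.st j) (A.st k) := by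
  have h := A.htet1 i (A.st i) 0 (A.st j) j k
  rw [A.hnorm i j k] at h
  have h2 : A.F (A.st i) i 0 j (A.st j) (A.st k) =
      (Real.sqrt (A.d (A.st k) / (A.d (A.st i) * A.d (A.st j))) : ℝ) *
        A.Δ (A.st i) (A.st j) (A.st k) := by
    have := A.hnorm (A.st i) (A.st j) (A.st k)
    rwa [A.hst i, A.hst j] at this
  rw [h2, A.dst i, A.dst j, A.dst k] at h
  exact mul_left_cancel₀ (sqrt_pos_ne _ (div_pos (A.hd _) (mul_pos (A.hd _) (A.hd _)))) h

lemma famb (i j k : Fin (N + 1)) : A.F i 0 (A.st i) j k j = A.Δ i j k := by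
  have h := A.htet3 i (A.st i) 0 (A.st j) j k
  rw [A.hst j] at h
  rw [A.hnorm i j k, A.d0, A.dst i] at h
  have hw : (1 : ℝ) * A.d k / (A.d i * A.d j) = A.d k / (A.d i * A.d j) := by ring
  rw [hw] at h
  have h2 : ((Real.sqrt (A.d k / (A.d i * A.d j)) : ℝ) : ℂ) * A.Δ i j k =
      ((Real.sqrt (A.d k / (A.d i * A.d j)) : ℝ) : ℂ) * A.F i 0 (A.st i) j k j := by
    rw [h]; ring
  exact (mul_left_cancel₀ (sqrt_pos_ne _ (div_pos (A.hd _) (mul_pos (A.hd _) (A.hd _)))) h2).symm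

lemma conjF (i j m k l n : Fin (N + 1)) :
    (starRingEnd ℂ) (A.F i j m k l n) = A.F j k (A.st n) l i m := by
  have h0 := A.hun i j m k l n
  have h1 := A.htet2 (A.st i) (A.st j) (A.st m) (A.st k) (A.st l) (A.st n)
  rw [A.hst m] at h1
  have h2 := A.htet3 (A.st l) (A.st k) m (A.st j) (A.st i) (A.st n)
  rw [A.hst j, A.dst n, A.dst k, A.dst i] at h2
  have h3 := A.htet1 (A.st l) m (A.st k) j (A.st n) (A.st i)
  rw [A.hst i] at h3
  have h4 := A.htet2 m (A.st l) (A.st k) (A.st n) j i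
  rw [A.hst k] at h4
  have h5 := A.htet3 j (A.st n) k (A.st l) m i
  rw [A.hst l, A.dst n] at h5
  rw [h0, h1, h2, h3, h4, h5]
  have hw : ((Real.sqrt (A.d k * A.d i / (A.d n * A.d m)) : ℝ) : ℂ) *
      ((Real.sqrt (A.d m * A.d n / (A.d k * A.d i)) : ℝ) : ℂ) = 1 := by
    rw [← Complex.ofReal_mul,
      ← Real.sqrt_mul (le_of_lt (div_pos (mul_pos (A.hd k) (A.hd i))
        (mul_pos (A.hd n) (A.hd m))))]
    have he : A.d k * A.d i / (A.d n * A.d m) * (A.d m * A.d n / (A.d k * A.d i)) =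
        1 := by
      have hnum : A.d k * A.d i * (A.d m * A.d n) =
          A.d n * A.d m * (A.d k * A.d i) := by ring
      rw [div_mul_div_comm, hnum,
        div_self (mul_ne_zero (mul_ne_zero (A.dne n) (A.dne m))
          (mul_ne_zero (A.dne k) (A.dne i)))]
    rw [he, Real.sqrt_one, Complex.ofReal_one]
  calc A.F j k (A.st n) l i m *
        ((Real.sqrt (A.d k * A.d i / (A.d n * A.d m)) : ℝ) : ℂ) *
        ((Real.sqrt (A.d m * A.d n / (A.d k * A.d i)) : ℝ) : ℂ)
      = A.F j k (A.st n) l i m *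
        (((Real.sqrt (A.d k * A.d i / (A.d n * A.d m)) : ℝ) : ℂ) *
         ((Real.sqrt (A.d m * A.d n / (A.d k * A.d i)) : ℝ) : ℂ)) := by ring
    _ = A.F j k (A.st n) l i m := by rw [hw, mul_one]

lemma MNI (M L Q K J : Fin (N + 1)) :
    ∑ n, A.Δ J M n * (A.F M L Q K J n * (starRingEnd ℂ) (A.F M L Q K J n)) =
      A.Δ J (A.st Q) K * A.Δ Q M L := by
  have hp := A.hpent M L Q K J J 0 M (A.st Q)
  have hf2 : ∀ n : Fin (N + 1), A.F J 0 (A.st J) M n M = A.Δ J M n :=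
    fun n => A.famb J M n
  have hf3 : ∀ n : Fin (N + 1),
      A.F J M n L K (A.st Q) = (starRingEnd ℂ) (A.F M L Q K J n) := by
    intro n
    have e1 : A.F M L Q K J n = A.F K J (A.st Q) M L (A.st n) := by
      rw [A.htet2 M L Q K J n, A.htet1 J K (A.st Q) L M n]
    rw [e1, A.conjF K J (A.st Q) M L (A.st n), A.hst n]
  have hr1 : A.F J 0 (A.st J) (A.st Q) K (A.st Q) = A.Δ J (A.st Q) K :=
    A.famb J (A.st Q) K
  have hr2 : A.F (A.st (A.st Q)) 0 (A.st Q) M L M = A.Δ Q M L := by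
    rw [A.hst Q]; exact A.famb Q M L
  rw [hr1, hr2] at hp
  rw [← hp]
  apply Finset.sum_congr rfl
  intro n _
  rw [hf2 n, hf3 n]
  ring

lemma MNI_zero (M L Q K J : Fin (N + 1))
    (h0 : A.Δ J (A.st Q) K * A.Δ Q M L = 0) :
    ∀ n, A.Δ J M n = 1 → A.F M L Q K J n = 0 := by
  have hs := A.MNI M L Q K J
  rw [h0] at hs
  have hterm : ∀ n : Fin (N + 1),
      A.Δ J M n * (A.F M L Q K J n * (starRingEnd ℂ) (A.F M L Q K J n)) =
        (((A.Δ J M n * (A.F M L Q K J n *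
          (starRingEnd ℂ) (A.F M L Q K J n))).re : ℝ) : ℂ) ∧
      0 ≤ (A.Δ J M n * (A.F M L Q K J n *
          (starRingEnd ℂ) (A.F M L Q K J n))).re := by
    intro n
    rcases A.hΔ01 J M n with h | h
    · rw [h, zero_mul]; simp
    · rw [h, one_mul, Complex.mul_conj]
      constructor
      · simp
      · simp [Complex.normSq_nonneg]
  have hsum0 : ∑ n, (A.Δ J M n * (A.F M L Q K J n *
      (starRingEnd ℂ) (A.F M L Q K J n))).re = 0 := by
    have := congrArg Complex.re hs
    rw [Complex.re_sum] at this
    simpa using this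
  have hzero := (Finset.sum_eq_zero_iff_of_nonneg
    (fun n _ => (hterm n).2)).mp hsum0
  intro n hΔ1
  have hn := hzero n (Finset.mem_univ n)
  have h2 := (hterm n).1
  rw [hn] at h2
  rw [hΔ1, one_mul, Complex.mul_conj] at h2
  simpa using h2

lemma imA (i j m k l n : Fin (N + 1)) :
    A.F i j m k l n = A.F (A.st m) l k n (A.st j) (A.st i) *
      ((Real.sqrt (A.d m * A.d n / (A.d k * A.d i)) : ℝ) : ℂ) := by
  have h1 := A.htet2 i j m k l n
  have h2 := A.htet3 l k (A.st m) j i n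
  rw [A.dst m] at h2
  have h3 := A.htet1 l (A.st m) k (A.st j) n i
  rw [h1, h2, h3]

lemma imC (i j m k l n : Fin (N + 1)) :
    A.F i j m k l n = A.F (A.st m) k l (A.st n) (A.st i) (A.st j) *
      ((Real.sqrt (A.d m * A.d n / (A.d l * A.d j)) : ℝ) : ℂ) := by
  have h1 := A.htet1 i j m k l n
  have h2 := A.htet2 j i m l k (A.st n)
  have h3 := A.htet3 k l (A.st m) i j (A.st n)
  rw [A.dst m, A.dst n] at h3
  have h4 := A.htet1 k (A.st m) l (A.st i) (A.st n) j
  rw [h1, h2, h3, h4]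

lemma SP_a (i j m k l n : Fin (N + 1)) (h1 : A.Δ i j m = 1)
    (h0 : A.Δ j k (A.st n) = 0) : A.F i j m k l n = 0 := by
  have hz : A.Δ (A.st j) (A.st k) n * A.Δ k (A.st m) l = 0 := by
    have : A.Δ (A.st j) (A.st k) n = 0 := by
      rw [← A.hst n, ← A.Δstar j k (A.st n)]; exact h0
    rw [this, zero_mul]
  have hc : A.Δ (A.st j) (A.st m) (A.st i) = 1 := by
    rw [← A.Δstar j m i, A.hΔcyc j m i, A.hΔcyc m i j]; exact h1
  have := A.MNI_zero (A.st m) l k n (A.st j) hz (A.st i) hc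
  rw [A.imA i j m k l n, this, zero_mul]

lemma SP_b (i j m k l n : Fin (N + 1)) (h1 : A.Δ i j m = 1)
    (h0 : A.Δ k l (A.st m) = 0) : A.F i j m k l n = 0 := by
  have hz : A.Δ (A.st j) (A.st k) n * A.Δ k (A.st m) l = 0 := by
    have : A.Δ k (A.st m) l = 0 := by
      rw [A.Δsym k (A.st m) l, A.hΔcyc (A.st m) k l]; exact h0
    rw [this, mul_zero]
  have hc : A.Δ (A.st j) (A.st m) (A.st i) = 1 := by
    rw [← A.Δstar j m i, A.hΔcyc j m i, A.hΔcyc m i j]; exact h1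
  have := A.MNI_zero (A.st m) l k n (A.st j) hz (A.st i) hc
  rw [A.imA i j m k l n, this, zero_mul]

lemma SP_c (i j m k l n : Fin (N + 1)) (h1 : A.Δ i j m = 1)
    (h0 : A.Δ i l n = 0) : A.F i j m k l n = 0 := by
  have hz : A.Δ (A.st i) (A.st l) (A.st n) * A.Δ l (A.st m) k = 0 := by
    have : A.Δ (A.st i) (A.st l) (A.st n) = 0 := by
      rw [← A.Δstar i l n]; exact h0
    rw [this, zero_mul]
  have hc : A.Δ (A.st i) (A.st m) (A.st j) = 1 := by
    rw [← A.Δstar i m j, A.Δsym i m j, A.hΔcyc m i j]; exact h1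
  have := A.MNI_zero (A.st m) k l (A.st n) (A.st i) hz (A.st j) hc
  rw [A.imC i j m k l n, this, zero_mul]

/-- Seed expansion at vertex 1. -/
lemma step1 (m1 j1 j3 b a k3 k1 l3 l1 : Fin (N + 1)) :
    A.F m1 (A.st j1) j3 (A.st b) k3 (A.st k1) *
      A.F m1 (A.st k1) k3 (A.st a) l3 (A.st l1) =
    ∑ n, A.F l3 (A.st a) (A.st k3) (A.st b) (A.st j3) n *
      A.F m1 (A.st j1) j3 n l3 (A.st l1) *
      A.F (A.st j1) l1 n (A.st a) (A.st b) k1 := by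
  have hp := A.hpent l3 (A.st a) (A.st k3) (A.st b) (A.st j3) (A.st j1) m1 l1 k1
  rw [A.hst j3, A.hst k3] at hp
  calc A.F m1 (A.st j1) j3 (A.st b) k3 (A.st k1) *
        A.F m1 (A.st k1) k3 (A.st a) l3 (A.st l1)
      = A.F (A.st j1) m1 j3 k3 (A.st b) k1 *
        A.F (A.st k1) m1 k3 l3 (A.st a) l1 := by
        rw [A.htet1 m1 (A.st j1) j3 (A.st b) k3 (A.st k1), A.hst k1,
          A.htet1 m1 (A.st k1) k3 (A.st a) l3 (A.st l1), A.hst l1]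
    _ = ∑ n, A.F l3 (A.st a) (A.st k3) (A.st b) (A.st j3) n *
          A.F (A.st j1) m1 j3 l3 n l1 *
          A.F (A.st j1) l1 n (A.st a) (A.st b) k1 := hp.symm
    _ = ∑ n, A.F l3 (A.st a) (A.st k3) (A.st b) (A.st j3) n *
          A.F m1 (A.st j1) j3 n l3 (A.st l1) *
          A.F (A.st j1) l1 n (A.st a) (A.st b) k1 := by
        apply Finset.sum_congr rfl
        intro n _
        rw [A.htet1 m1 (A.st j1) j3 n l3 (A.st l1), A.hst l1]

/-- Telescoping contraction at a vertex. -/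
lemma starStep (m j jp b a kp lp l n : Fin (N + 1)) :
    ∑ k, A.F m (A.st j) jp (A.st b) kp (A.st k) *
      A.F m (A.st k) kp (A.st a) lp (A.st l) *
      A.F l (A.st a) (A.st k) (A.st b) (A.st j) n =
    A.F lp (A.st a) (A.st kp) (A.st b) (A.st jp) n *
      A.F m (A.st j) jp n lp (A.st l) := by
  have hp := A.hpent m (A.st j) jp (A.st b) kp (A.st a) lp l (A.st n)
  rw [A.hst n] at hp
  have hinv : Function.Involutive A.st := A.hst
  calc ∑ k, A.F m (A.st j) jp (A.st b) kp (A.st k) *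
        A.F m (A.st k) kp (A.st a) lp (A.st l) *
        A.F l (A.st a) (A.st k) (A.st b) (A.st j) n
      = ∑ k, A.F m (A.st j) jp (A.st b) kp (A.st k) *
          A.F (A.st a) lp (A.st kp) m (A.st k) l *
          A.F (A.st a) l (A.st k) (A.st j) (A.st b) (A.st n) := by
        apply Finset.sum_congr rfl
        intro k _
        rw [A.htet2 m (A.st k) kp (A.st a) lp (A.st l),
          A.htet1 lp (A.st a) (A.st kp) (A.st k) m (A.st l), A.hst l,
          A.htet1 l (A.st a) (A.st k) (A.st b) (A.st j) n]
    _ = ∑ n', A.F m (A.st j) jp (A.st b) kp n' *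
          A.F (A.st a) lp (A.st kp) m n' l *
          A.F (A.st a) l n' (A.st j) (A.st b) (A.st n) := by
        apply Fintype.sum_equiv hinv.toPerm
        intro k
        rfl
    _ = A.F (A.st a) lp (A.st kp) (A.st jp) (A.st b) (A.st n) *
          A.F n lp (A.st jp) m (A.st j) l := hp
    _ = A.F lp (A.st a) (A.st kp) (A.st b) (A.st jp) n *
          A.F m (A.st j) jp n lp (A.st l) := by
        rw [A.htet1 lp (A.st a) (A.st kp) (A.st b) (A.st jp) n,
          A.htet2 m (A.st j) jp n lp (A.st l),
          A.htet1 lp n (A.st jp) (A.st j) m (A.st l), A.hst l]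

/-- The closed-loop evaluation: on the support of `C₁`, the residual sum equals `Δ a b n`. -/
lemma Xeval (m1 j1 j3 l1 l3 a b n : Fin (N + 1))
    (h1 : A.Δ m1 (A.st j1) j3 = 1) :
    A.F m1 (A.st j1) j3 n l3 (A.st l1) *
      (∑ k, A.F (A.st j1) l1 n (A.st a) (A.st b) k *
        A.F l1 (A.st a) (A.st k) (A.st b) (A.st j1) n) =
    A.Δ a b n * A.F m1 (A.st j1) j3 n l3 (A.st l1) := by
  by_cases hC : A.F m1 (A.st j1) j3 n l3 (A.st l1) = 0
  · rw [hC]; ring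
  · -- the vertex delta γ is forced to be 1
    have hγ : A.Δ (A.st j1) n l1 = 1 := by
      rcases A.hΔ01 (A.st j1) n l1 with h | h
      · exfalso
        apply hC
        apply A.SP_a m1 (A.st j1) j3 n l3 (A.st l1) h1
        rw [A.hst l1]; exact h
      · exact h
    have hτ : A.Δ (A.st j1) l1 n = 1 := by
      rw [A.Δsym (A.st j1) l1 n, A.hΔcyc l1 (A.st j1) n]; exact hγ
    rcases A.hΔ01 a b n with hε | hε
    · -- all Q vanish
      have hQ : ∀ k, A.F (A.st j1) l1 n (A.st a) (A.st b) k = 0 := by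
        intro k
        apply A.SP_b (A.st j1) l1 n (A.st a) (A.st b) k hτ
        rw [← A.Δstar a b n]; exact hε
      rw [hε]
      have : (∑ k, A.F (A.st j1) l1 n (A.st a) (A.st b) k *
          A.F l1 (A.st a) (A.st k) (A.st b) (A.st j1) n) = 0 := by
        apply Finset.sum_eq_zero
        intro k _
        rw [hQ k, zero_mul]
      rw [this]; ring
    · -- the sum evaluates by the master norm identity
      have hP : ∀ k, A.F l1 (A.st a) (A.st k) (A.st b) (A.st j1) n =
          (starRingEnd ℂ) (A.F (A.st j1) l1 n (A.st a) (A.st b) k) := by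
        intro k
        rw [A.conjF (A.st j1) l1 n (A.st a) (A.st b) k]
      have hα : ∀ k, A.F (A.st j1) l1 n (A.st a) (A.st b) k *
          (starRingEnd ℂ) (A.F (A.st j1) l1 n (A.st a) (A.st b) k) =
          A.Δ (A.st b) (A.st j1) k * (A.F (A.st j1) l1 n (A.st a) (A.st b) k *
          (starRingEnd ℂ) (A.F (A.st j1) l1 n (A.st a) (A.st b) k)) := by
        intro k
        by_cases hQ : A.F (A.st j1) l1 n (A.st a) (A.st b) k = 0
        · rw [hQ]; ring
        · have : A.Δ (A.st j1) (A.st b) k = 1 := by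
            rcases A.hΔ01 (A.st j1) (A.st b) k with h | h
            · exact absurd (A.SP_c (A.st j1) l1 n (A.st a) (A.st b) k hτ h) hQ
            · exact h
          rw [A.Δsym (A.st b) (A.st j1) k, this, one_mul]
      have hsum : (∑ k, A.F (A.st j1) l1 n (A.st a) (A.st b) k *
          A.F l1 (A.st a) (A.st k) (A.st b) (A.st j1) n) = 1 := by
        calc (∑ k, A.F (A.st j1) l1 n (A.st a) (A.st b) k *
            A.F l1 (A.st a) (A.st k) (A.st b) (A.st j1) n)
            = ∑ k, A.Δ (A.st b) (A.st j1) k *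
              (A.F (A.st j1) l1 n (A.st a) (A.st b) k *
              (starRingEnd ℂ) (A.F (A.st j1) l1 n (A.st a) (A.st b) k)) := by
              apply Finset.sum_congr rfl
              intro k _
              rw [hP k, ← hα k]
          _ = A.Δ (A.st b) (A.st n) (A.st a) * A.Δ n (A.st j1) l1 :=
              A.MNI (A.st j1) l1 n (A.st a) (A.st b)
          _ = 1 := by
              have e1 : A.Δ (A.st b) (A.st n) (A.st a) = 1 := by
                rw [← A.Δstar b n a, A.hΔcyc b n a, A.hΔcyc n a b]; exact hε
              have e2 : A.Δ n (A.st j1) l1 = 1 := by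
                rw [A.Δsym n (A.st j1) l1]; exact hγ
              rw [e1, e2, mul_one]
      rw [hsum, hε]; ring

/-- Contraction of vertices 2 and 3. -/
lemma contract23 (m2 m3 j1 j2 j3 l1 l2 l3 a b n k1 : Fin (N + 1)) :
    (∑ k2, ∑ k3, A.F l3 (A.st a) (A.st k3) (A.st b) (A.st j3) n *
      ((A.F m2 (A.st j2) j1 (A.st b) k1 (A.st k2) *
        A.F m2 (A.st k2) k1 (A.st a) l1 (A.st l2)) *
       (A.F m3 (A.st j3) j2 (A.st b) k2 (A.st k3) *
        A.F m3 (A.st k3) k2 (A.st a) l2 (A.st l3)))) =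
    (A.F l1 (A.st a) (A.st k1) (A.st b) (A.st j1) n *
      A.F m2 (A.st j2) j1 n l1 (A.st l2)) *
      A.F m3 (A.st j3) j2 n l2 (A.st l3) := by
  calc (∑ k2, ∑ k3, A.F l3 (A.st a) (A.st k3) (A.st b) (A.st j3) n *
      ((A.F m2 (A.st j2) j1 (A.st b) k1 (A.st k2) *
        A.F m2 (A.st k2) k1 (A.st a) l1 (A.st l2)) *
       (A.F m3 (A.st j3) j2 (A.st b) k2 (A.st k3) *
        A.F m3 (A.st k3) k2 (A.st a) l2 (A.st l3))))
      = ∑ k2, (A.F m2 (A.st j2) j1 (A.st b) k1 (A.st k2) *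
          A.F m2 (A.st k2) k1 (A.st a) l1 (A.st l2)) *
          (∑ k3, A.F m3 (A.st j3) j2 (A.st b) k2 (A.st k3) *
            A.F m3 (A.st k3) k2 (A.st a) l2 (A.st l3) *
            A.F l3 (A.st a) (A.st k3) (A.st b) (A.st j3) n) := by
        apply Finset.sum_congr rfl
        intro k2 _
        rw [Finset.mul_sum]
        apply Finset.sum_congr rfl
        intro k3 _
        ring
    _ = ∑ k2, (A.F m2 (A.st j2) j1 (A.st b) k1 (A.st k2) *
          A.F m2 (A.st k2) k1 (A.st a) l1 (A.st l2)) *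
          (A.F l2 (A.st a) (A.st k2) (A.st b) (A.st j2) n *
            A.F m3 (A.st j3) j2 n l2 (A.st l3)) := by
        apply Finset.sum_congr rfl
        intro k2 _
        rw [A.starStep m3 j3 j2 b a k2 l2 l3 n]
    _ = (∑ k2, A.F m2 (A.st j2) j1 (A.st b) k1 (A.st k2) *
          A.F m2 (A.st k2) k1 (A.st a) l1 (A.st l2) *
          A.F l2 (A.st a) (A.st k2) (A.st b) (A.st j2) n) *
          A.F m3 (A.st j3) j2 n l2 (A.st l3) := by
        rw [Finset.sum_mul]
        apply Finset.sum_congr rfl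
        intro k2 _
        ring
    _ = (A.F l1 (A.st a) (A.st k1) (A.st b) (A.st j1) n *
          A.F m2 (A.st j2) j1 n l1 (A.st l2)) *
          A.F m3 (A.st j3) j2 n l2 (A.st l3) := by
        rw [A.starStep m2 j2 j1 b a k1 l1 l2 n]

lemma sum_comm4 {α : Type*} [Fintype α] {M : Type*} [AddCommMonoid M]
    (f : α → α → α → α → M) :
    ∑ a, ∑ b, ∑ c, ∑ d, f a b c d = ∑ d, ∑ a, ∑ b, ∑ c, f a b c d := by
  calc ∑ a, ∑ b, ∑ c, ∑ d, f a b c d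
      = ∑ a, ∑ b, ∑ d, ∑ c, f a b c d :=
        Finset.sum_congr rfl (fun a _ => Finset.sum_congr rfl
          (fun b _ => Finset.sum_comm))
    _ = ∑ a, ∑ d, ∑ b, ∑ c, f a b c d :=
        Finset.sum_congr rfl (fun a _ => Finset.sum_comm)
    _ = ∑ d, ∑ a, ∑ b, ∑ c, f a b c d := Finset.sum_comm

/-- The core fusion identity for physical boundary data. -/
lemma core (m1 m2 m3 l1 l2 l3 j1 j2 j3 a b : Fin (N + 1))
    (h1 : A.Δ m1 (A.st j1) j3 = 1) :
    (∑ k1, ∑ k2, ∑ k3,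
      (A.F m1 (A.st k1) k3 (A.st a) l3 (A.st l1) *
        A.F m2 (A.st k2) k1 (A.st a) l1 (A.st l2) *
        A.F m3 (A.st k3) k2 (A.st a) l2 (A.st l3)) *
      (A.F m1 (A.st j1) j3 (A.st b) k3 (A.st k1) *
        A.F m2 (A.st j2) j1 (A.st b) k1 (A.st k2) *
        A.F m3 (A.st j3) j2 (A.st b) k2 (A.st k3))) =
    ∑ s, A.Δ a b (A.st s) *
      (A.F m1 (A.st j1) j3 (A.st s) l3 (A.st l1) *
        A.F m2 (A.st j2) j1 (A.st s) l1 (A.st l2) *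
        A.F m3 (A.st j3) j2 (A.st s) l2 (A.st l3)) := by
  have hinv : Function.Involutive A.st := A.hst
  calc (∑ k1, ∑ k2, ∑ k3,
      (A.F m1 (A.st k1) k3 (A.st a) l3 (A.st l1) *
        A.F m2 (A.st k2) k1 (A.st a) l1 (A.st l2) *
        A.F m3 (A.st k3) k2 (A.st a) l2 (A.st l3)) *
      (A.F m1 (A.st j1) j3 (A.st b) k3 (A.st k1) *
        A.F m2 (A.st j2) j1 (A.st b) k1 (A.st k2) *
        A.F m3 (A.st j3) j2 (A.st b) k2 (A.st k3)))
      = ∑ k1, ∑ k2, ∑ k3, ∑ n,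
          (A.F l3 (A.st a) (A.st k3) (A.st b) (A.st j3) n *
            A.F m1 (A.st j1) j3 n l3 (A.st l1) *
            A.F (A.st j1) l1 n (A.st a) (A.st b) k1) *
          ((A.F m2 (A.st j2) j1 (A.st b) k1 (A.st k2) *
            A.F m2 (A.st k2) k1 (A.st a) l1 (A.st l2)) *
           (A.F m3 (A.st j3) j2 (A.st b) k2 (A.st k3) *
            A.F m3 (A.st k3) k2 (A.st a) l2 (A.st l3))) := by
        apply Finset.sum_congr rfl; intro k1 _
        apply Finset.sum_congr rfl; intro k2 _
        apply Finset.sum_congr rfl; intro k3 _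
        calc (A.F m1 (A.st k1) k3 (A.st a) l3 (A.st l1) *
              A.F m2 (A.st k2) k1 (A.st a) l1 (A.st l2) *
              A.F m3 (A.st k3) k2 (A.st a) l2 (A.st l3)) *
            (A.F m1 (A.st j1) j3 (A.st b) k3 (A.st k1) *
              A.F m2 (A.st j2) j1 (A.st b) k1 (A.st k2) *
              A.F m3 (A.st j3) j2 (A.st b) k2 (A.st k3))
            = (A.F m1 (A.st j1) j3 (A.st b) k3 (A.st k1) *
                A.F m1 (A.st k1) k3 (A.st a) l3 (A.st l1)) *
              ((A.F m2 (A.st j2) j1 (A.st b) k1 (A.st k2) *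
                A.F m2 (A.st k2) k1 (A.st a) l1 (A.st l2)) *
               (A.F m3 (A.st j3) j2 (A.st b) k2 (A.st k3) *
                A.F m3 (A.st k3) k2 (A.st a) l2 (A.st l3))) := by ring
          _ = (∑ n, A.F l3 (A.st a) (A.st k3) (A.st b) (A.st j3) n *
                A.F m1 (A.st j1) j3 n l3 (A.st l1) *
                A.F (A.st j1) l1 n (A.st a) (A.st b) k1) *
              ((A.F m2 (A.st j2) j1 (A.st b) k1 (A.st k2) *
                A.F m2 (A.st k2) k1 (A.st a) l1 (A.st l2)) *
               (A.F m3 (A.st j3) j2 (A.st b) k2 (A.st k3) *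
                A.F m3 (A.st k3) k2 (A.st a) l2 (A.st l3))) := by
              rw [A.step1 m1 j1 j3 b a k3 k1 l3 l1]
          _ = ∑ n, (A.F l3 (A.st a) (A.st k3) (A.st b) (A.st j3) n *
                A.F m1 (A.st j1) j3 n l3 (A.st l1) *
                A.F (A.st j1) l1 n (A.st a) (A.st b) k1) *
              ((A.F m2 (A.st j2) j1 (A.st b) k1 (A.st k2) *
                A.F m2 (A.st k2) k1 (A.st a) l1 (A.st l2)) *
               (A.F m3 (A.st j3) j2 (A.st b) k2 (A.st k3) *
                A.F m3 (A.st k3) k2 (A.st a) l2 (A.st l3))) := Finset.sum_mul _ _ _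
    _ = ∑ n, ∑ k1, ∑ k2, ∑ k3,
          (A.F l3 (A.st a) (A.st k3) (A.st b) (A.st j3) n *
            A.F m1 (A.st j1) j3 n l3 (A.st l1) *
            A.F (A.st j1) l1 n (A.st a) (A.st b) k1) *
          ((A.F m2 (A.st j2) j1 (A.st b) k1 (A.st k2) *
            A.F m2 (A.st k2) k1 (A.st a) l1 (A.st l2)) *
           (A.F m3 (A.st j3) j2 (A.st b) k2 (A.st k3) *
            A.F m3 (A.st k3) k2 (A.st a) l2 (A.st l3))) :=
        sum_comm4 _
    _ = ∑ n, ∑ k1,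
          (A.F m1 (A.st j1) j3 n l3 (A.st l1) *
            A.F (A.st j1) l1 n (A.st a) (A.st b) k1) *
          (∑ k2, ∑ k3, A.F l3 (A.st a) (A.st k3) (A.st b) (A.st j3) n *
            ((A.F m2 (A.st j2) j1 (A.st b) k1 (A.st k2) *
              A.F m2 (A.st k2) k1 (A.st a) l1 (A.st l2)) *
             (A.F m3 (A.st j3) j2 (A.st b) k2 (A.st k3) *
              A.F m3 (A.st k3) k2 (A.st a) l2 (A.st l3)))) := by
        apply Finset.sum_congr rfl; intro n _
        apply Finset.sum_congr rfl; intro k1 _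
        rw [Finset.mul_sum]
        apply Finset.sum_congr rfl; intro k2 _
        rw [Finset.mul_sum]
        apply Finset.sum_congr rfl; intro k3 _
        ring
    _ = ∑ n, ∑ k1,
          (A.F m1 (A.st j1) j3 n l3 (A.st l1) *
            A.F (A.st j1) l1 n (A.st a) (A.st b) k1) *
          ((A.F l1 (A.st a) (A.st k1) (A.st b) (A.st j1) n *
            A.F m2 (A.st j2) j1 n l1 (A.st l2)) *
            A.F m3 (A.st j3) j2 n l2 (A.st l3)) := by
        apply Finset.sum_congr rfl; intro n _
        apply Finset.sum_congr rfl; intro k1 _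
        rw [A.contract23 m2 m3 j1 j2 j3 l1 l2 l3 a b n k1]
    _ = ∑ n, (A.F m2 (A.st j2) j1 n l1 (A.st l2) *
          A.F m3 (A.st j3) j2 n l2 (A.st l3)) *
          (A.F m1 (A.st j1) j3 n l3 (A.st l1) *
            ∑ k1, A.F (A.st j1) l1 n (A.st a) (A.st b) k1 *
              A.F l1 (A.st a) (A.st k1) (A.st b) (A.st j1) n) := by
        apply Finset.sum_congr rfl; intro n _
        rw [Finset.mul_sum, Finset.mul_sum]
        apply Finset.sum_congr rfl; intro k1 _
        ring
    _ = ∑ n, (A.F m2 (A.st j2) j1 n l1 (A.st l2) *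
          A.F m3 (A.st j3) j2 n l2 (A.st l3)) *
          (A.Δ a b n * A.F m1 (A.st j1) j3 n l3 (A.st l1)) := by
        apply Finset.sum_congr rfl; intro n _
        rw [A.Xeval m1 j1 j3 l1 l3 a b n h1]
    _ = ∑ s, A.Δ a b (A.st s) *
          (A.F m1 (A.st j1) j3 (A.st s) l3 (A.st l1) *
            A.F m2 (A.st j2) j1 (A.st s) l1 (A.st l2) *
            A.F m3 (A.st j3) j2 (A.st s) l2 (A.st l3)) := by
        refine (Fintype.sum_equiv hinv.toPerm _ _ ?_).symm
        intro s
        simp only [Function.Involutive.coe_toPerm]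
        ring

end SN
end SNproof

/-- The string operator `B^i` of a triangular plaquette, acting on the basis
`|m₁m₂m₃; j₁j₂j₃⟩` (outer legs `mᵥ`, boundary edges `jᵥ`) by
`B^i |m;j⟩ = Σ_k (Π_ν F^{m_ν j_ν* j_{ν-1}}_{i* k_{ν-1} k_ν*}) |m;k⟩` (indices mod 3).
The matrix indices are pairs `((m₁,m₂,m₃), (k₁,k₂,k₃))`. -/
def BTri {N : ℕ}
    (F : Fin (N + 1) → Fin (N + 1) → Fin (N + 1) → Fin (N + 1) → Fin (N + 1) →
      Fin (N + 1) → ℂ)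
    (st : Fin (N + 1) → Fin (N + 1)) (i : Fin (N + 1)) :
    Matrix ((Fin (N + 1) × Fin (N + 1) × Fin (N + 1)) ×
            (Fin (N + 1) × Fin (N + 1) × Fin (N + 1)))
           ((Fin (N + 1) × Fin (N + 1) × Fin (N + 1)) ×
            (Fin (N + 1) × Fin (N + 1) × Fin (N + 1))) ℂ :=
  fun x y =>
    if x.1 = y.1 then
      F x.1.1 (st y.2.1) y.2.2.2 (st i) x.2.2.2 (st x.2.1) *
      F x.1.2.1 (st y.2.2.1) y.2.1 (st i) x.2.1 (st x.2.2.1) *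
      F x.1.2.2 (st y.2.2.2) y.2.2.1 (st i) x.2.2.1 (st x.2.2.2)
    else 0

/-- Under the string-net axioms, the triangular-plaquette string operators
satisfy the fusion algebra `B^i B^j = Σ_k δ_{ijk*} B^k` on the physical subspace. -/
theorem plaquette_B_fusion_algebra {N : ℕ}
    (st : Fin (N + 1) → Fin (N + 1))
    (hst : ∀ i, st (st i) = i) (hst0 : st 0 = 0)
    (Δ : Fin (N + 1) → Fin (N + 1) → Fin (N + 1) → ℂ)
    (hΔ01 : ∀ i j k, Δ i j k = 0 ∨ Δ i j k = 1)
    (hΔcyc : ∀ i j k, Δ i j k = Δ j k i)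
    (hΔbr : ∀ i j, Δ i (st j) 0 = if i = j then 1 else 0)
    (F : Fin (N + 1) → Fin (N + 1) → Fin (N + 1) → Fin (N + 1) → Fin (N + 1) →
      Fin (N + 1) → ℂ)
    (d : Fin (N + 1) → ℝ)
    (hd : ∀ i, 0 < d i)
    (hdF : ∀ i, F i (st i) 0 i (st i) 0 = ((d i)⁻¹ : ℝ))
    (hphys : ∀ i j m k l n,
      F i j m k l n * Δ i j m * Δ k l (st m) = F i j m k l n * Δ i l n * Δ j k (st n))
    (hpent : ∀ m l q k p j i s r,
      ∑ n, F m l q k p n * F j i (st p) m n s * F j s n l k r =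
        F j i (st p) (st q) k r * F (st r) i (st q) m l s)
    (hun : ∀ i j m k l n, (starRingEnd ℂ) (F i j m k l n) =
      F (st i) (st j) (st m) (st k) (st l) (st n))
    (htet : ∀ i j m k l n,
      F i j m k l n = F j i m l k (st n) ∧
      F i j m k l n = F l k (st m) j i n ∧
      F i j m k l n = F i m j (st k) n l *
        (Real.sqrt (d m * d n / (d j * d l)) : ℝ))
    (hnorm : ∀ i j k, F i (st i) 0 (st j) j k =
      (Real.sqrt (d k / (d i * d j)) : ℝ) * Δ i j k)
    -- the physical subspace: every vertex triple is allowed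
    (Phys : Set ((Fin (N + 1) × Fin (N + 1) × Fin (N + 1)) ×
                 (Fin (N + 1) × Fin (N + 1) × Fin (N + 1))))
    (hPhys : ∀ x, x ∈ Phys ↔
      Δ x.1.1 (st x.2.1) x.2.2.2 = 1 ∧ Δ x.1.2.1 (st x.2.2.1) x.2.1 = 1 ∧
      Δ x.1.2.2 (st x.2.2.2) x.2.2.1 = 1) :
    ∀ i j, ∀ v, (∀ x, x ∉ Phys → v x = 0) →
      (BTri F st i * BTri F st j).mulVec v =
        ((∑ k, Δ i j (st k) • BTri F st k).mulVec v) := by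
  intro a b v hv
  set A : SNproof.SN N :=
    { st := st, Δ := Δ, F := F, d := d, hst := hst, hst0 := hst0,
      hΔ01 := hΔ01, hΔcyc := hΔcyc, hΔbr := hΔbr, hd := hd, hdF := hdF,
      hpent := hpent, hun := hun,
      htet1 := fun i j m k l n => (htet i j m k l n).1,
      htet2 := fun i j m k l n => (htet i j m k l n).2.1,
      htet3 := fun i j m k l n => (htet i j m k l n).2.2,
      hnorm := hnorm } with hA
  funext x
  simp only [Matrix.mulVec, dotProduct]
  apply Finset.sum_congr rfl
  intro y _
  by_cases hy : y ∈ Phys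
  · congr 1
    obtain ⟨hδ1, -, -⟩ := (hPhys y).mp hy
    obtain ⟨⟨m1, m2, m3⟩, l1, l2, l3⟩ := x
    obtain ⟨⟨w1, w2, w3⟩, j1, j2, j3⟩ := y
    rw [Matrix.mul_apply, Matrix.sum_apply]
    simp only [Matrix.smul_apply, smul_eq_mul, BTri]
    by_cases hm : ((m1, m2, m3) : Fin (N+1) × Fin (N+1) × Fin (N+1)) = (w1, w2, w3)
    · injection hm with hm1 hm'
      injection hm' with hm2 hm3
      subst hm1; subst hm2; subst hm3
      simp only [eq_self_iff_true, if_true]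
      rw [Fintype.sum_prod_type]
      rw [Finset.sum_eq_single_of_mem
        ((m1, m2, m3) : Fin (N+1) × Fin (N+1) × Fin (N+1))
        (Finset.mem_univ _) ?side]
      case side =>
        intro z1 _ hz1
        apply Finset.sum_eq_zero
        intro z2 _
        rw [if_neg (fun h => hz1 h.symm), zero_mul]
      simp only [eq_self_iff_true, if_true]
      rw [Fintype.sum_prod_type]
      simp only [Fintype.sum_prod_type]
      exact A.core m1 m2 m3 l1 l2 l3 j1 j2 j3 a b hδ1
    · trans (0 : ℂ)
      · apply Finset.sum_eq_zero
        intro z _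
        by_cases hz : ((m1, m2, m3) : Fin (N+1) × Fin (N+1) × Fin (N+1)) = z.1
        · rw [if_neg (fun h => hm (hz.trans h)), mul_zero]
        · rw [if_neg hz, zero_mul]
      · symm
        apply Finset.sum_eq_zero
        intro s _
        rw [if_neg hm, mul_zero]
  · rw [hv y hy, mul_zero, mul_zero]
end
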